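/- arXiv:2106.02500 — 11 statements merged into one kernel-verified Lean document; each statement's English description precedes it below -/
import Mathlib

section
/- Let G be a connected graph of order n ≥ 3. Then ρ(G) − π(G) ≤ (n−1)/4 if n is odd, and ρ(G) − π(G) ≤ (n−1)/4 − 1/(4n−4) if n is even. -/
open SimpleGraph Finset

lemma aux_dist_getVert_le {V : Type*} {G : SimpleGraph V} (hconn : G.Connected)
    {u v : V} (p : G.Walk u v) : ∀ b : ℕ, G.dist u (p.getVert b) ≤ b := by
  induction p with
  | nil => intro b; simp [SimpleGraph.Walk.getVert_of_length_le, SimpleGraph.dist_self]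
  | @cons a x c h q ih =>
    intro b
    cases b with
    | zero => simp [SimpleGraph.Walk.getVert_zero, SimpleGraph.dist_self]
    | succ b =>
      rw [SimpleGraph.Walk.getVert_cons_succ]
      calc G.dist a (q.getVert b) ≤ G.dist a x + G.dist x (q.getVert b) := hconn.dist_triangle
        _ ≤ b + 1 := by
            have h1 : G.dist a x = 1 := SimpleGraph.dist_eq_one_iff_adj.mpr h
            have := ih b
            omega

lemma aux_dist_getVert_eq {V : Type*} {G : SimpleGraph V} (hconn : G.Connected)
    {u v : V} (p : G.Walk u v) (hp : p.length = G.dist u v) {b : ℕ} (hb : b ≤ G.dist u v) :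
    G.dist u (p.getVert b) = b ∧ G.dist u v ≤ b + G.dist v (p.getVert b) := by
  have h1 : G.dist u (p.getVert b) ≤ b := aux_dist_getVert_le hconn p b
  have h2 : G.dist v (p.getVert b) ≤ G.dist u v - b := by
    have := aux_dist_getVert_le hconn p.reverse (G.dist u v - b)
    rwa [SimpleGraph.Walk.getVert_reverse, hp, Nat.sub_sub_self hb] at this
  have h3 : G.dist u v ≤ G.dist u (p.getVert b) + G.dist (p.getVert b) v := hconn.dist_triangle
  rw [SimpleGraph.dist_comm (u := p.getVert b)] at h3
  constructor <;> omega

lemma aux_key {V : Type*} [Fintype V] [DecidableEq V] {G : SimpleGraph V}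
    (hconn : G.Connected) (n : ℕ) (hn : Fintype.card V = n) (u v : V) :
    ∑ w : V, (G.dist u w : ℝ) - ∑ w : V, (G.dist v w : ℝ)
      ≤ (G.dist u v : ℝ) * ((n : ℝ) - 1 - (G.dist u v : ℝ)) := by
  classical
  set d := G.dist u v with hd
  obtain ⟨p, hp⟩ := hconn.exists_walk_length_eq_dist u v
  set S : Finset V := (Finset.range d).image p.getVert with hS
  have hmem : ∀ b ∈ Finset.range d, G.dist u (p.getVert b) = b ∧ d ≤ b + G.dist v (p.getVert b) := by
    intro b hb
    exact aux_dist_getVert_eq hconn p hp (le_of_lt (Finset.mem_range.mp hb))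
  have hinj : Set.InjOn p.getVert (Finset.range d) := by
    intro a ha b hb hab
    have h1 := (hmem a ha).1
    have h2 := (hmem b hb).1
    rw [hab] at h1; rw [h1] at h2; exact h2
  have hcardS : S.card = d := by rw [hS, Finset.card_image_of_injOn hinj, Finset.card_range]
  have hdn : d ≤ n := by rw [← hcardS, ← hn]; exact Finset.card_le_univ S
  -- split sum
  have hsplit : ∑ w : V, ((G.dist u w : ℝ) - (G.dist v w : ℝ))
      = ∑ w ∈ S, ((G.dist u w : ℝ) - (G.dist v w : ℝ))
        + ∑ w ∈ Sᶜ, ((G.dist u w : ℝ) - (G.dist v w : ℝ)) := by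
    rw [Finset.sum_add_sum_compl]
  have hboundS : ∑ w ∈ S, ((G.dist u w : ℝ) - (G.dist v w : ℝ))
      ≤ ∑ b ∈ Finset.range d, (2 * (b : ℝ) - d) := by
    rw [hS, Finset.sum_image (fun a ha b hb hab => hinj ha hb hab)]
    apply Finset.sum_le_sum
    intro b hb
    obtain ⟨h1, h2⟩ := hmem b hb
    rw [h1]
    have : (d : ℝ) ≤ b + G.dist v (p.getVert b) := by exact_mod_cast h2
    linarith
  have hgauss : ∑ b ∈ Finset.range d, (2 * (b : ℝ) - d) = -(d : ℝ) := by
    have h1 : ∑ b ∈ Finset.range d, (b : ℝ) = d * (d - 1) / 2 := by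
      induction d with
      | zero => simp
      | succ m ih => rw [Finset.sum_range_succ, ih]; push_cast; ring
    rw [Finset.sum_sub_distrib, ← Finset.mul_sum, h1, Finset.sum_const, Finset.card_range]
    ring
  have hboundC : ∑ w ∈ Sᶜ, ((G.dist u w : ℝ) - (G.dist v w : ℝ)) ≤ ((n : ℝ) - d) * d := by
    have hcc : (Sᶜ.card : ℝ) = (n : ℝ) - d := by
      rw [Finset.card_compl, hcardS, hn, Nat.cast_sub hdn]
    calc ∑ w ∈ Sᶜ, ((G.dist u w : ℝ) - (G.dist v w : ℝ))
        ≤ ∑ _w ∈ Sᶜ, (d : ℝ) := by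
          apply Finset.sum_le_sum
          intro w _
          have := hconn.dist_triangle (u := u) (v := v) (w := w)
          have : (G.dist u w : ℝ) ≤ d + G.dist v w := by exact_mod_cast this
          linarith
      _ = ((n : ℝ) - d) * d := by rw [Finset.sum_const, nsmul_eq_mul, hcc]
  have := hsplit ▸ (add_le_add (hboundS.trans_eq hgauss) hboundC)
  rw [Finset.sum_sub_distrib] at this
  linarith

lemma aux_int (d n : ℤ) (hn : Even n) : 4 * d * (n - 1 - d) ≤ n * (n - 2) := by
  obtain ⟨k, hk⟩ := hn
  subst hk
  have ht : (k - d) * (k - d - 1) ≥ 0 := by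
    rcases le_or_gt (k - d) 0 with h | h
    · have h2 : k - d - 1 ≤ 0 := by omega
      nlinarith
    · exact mul_nonneg (by omega) (by omega)
  nlinarith [ht]

theorem stmt0 {V : Type*} [Fintype V] [DecidableEq V] (G : SimpleGraph V)
    [DecidableRel G.Adj] (n : ℕ) (hn : Fintype.card V = n) (hconn : G.Connected) (h3 : 3 ≤ n) :
    (Odd n → (⨆ v : V, (∑ w : V, (G.dist v w : ℝ)) / ((n : ℝ) - 1)) - (⨅ v : V, (∑ w : V, (G.dist v w : ℝ)) / ((n : ℝ) - 1)) ≤ ((n : ℝ) - 1) / 4) ∧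
    (Even n → (⨆ v : V, (∑ w : V, (G.dist v w : ℝ)) / ((n : ℝ) - 1)) - (⨅ v : V, (∑ w : V, (G.dist v w : ℝ)) / ((n : ℝ) - 1)) ≤ ((n : ℝ) - 1) / 4 - 1 / (4 * (n : ℝ) - 4)) := by
  have hcard : 0 < Fintype.card V := by omega
  have : Nonempty V := Fintype.card_pos_iff.mp hcard
  have hn3 : (3 : ℝ) ≤ (n : ℝ) := by exact_mod_cast h3
  have hn1 : (0 : ℝ) < (n : ℝ) - 1 := by linarith
  set f : V → ℝ := fun v => (∑ w : V, (G.dist v w : ℝ)) / ((n : ℝ) - 1) with hf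
  have main : ∀ B : ℝ, (∀ u v : V, f u - f v ≤ B) →
      (⨆ v : V, f v) - (⨅ v : V, f v) ≤ B := by
    intro B h
    have h1 : (⨆ v : V, f v) ≤ (⨅ v : V, f v) + B := by
      apply ciSup_le
      intro u
      have h2 : f u - B ≤ ⨅ v : V, f v := le_ciInf fun v => by linarith [h u v]
      linarith
    linarith
  have pair : ∀ (u v : V), f u - f v ≤ ((G.dist u v : ℝ) * ((n : ℝ) - 1 - (G.dist u v : ℝ))) / ((n : ℝ) - 1) := by
    intro u v
    have hk := aux_key hconn n hn u v
    rw [hf]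
    rw [div_sub_div_same]
    exact div_le_div_of_nonneg_right hk hn1.le |>.trans_eq rfl
  constructor
  · intro _
    apply main
    intro u v
    refine (pair u v).trans ?_
    rw [div_le_iff₀ hn1]
    nlinarith [sq_nonneg ((n : ℝ) - 1 - 2 * (G.dist u v : ℝ))]
  · intro heven
    apply main
    intro u v
    refine (pair u v).trans ?_
    have hint : 4 * ((G.dist u v : ℤ)) * ((n : ℤ) - 1 - (G.dist u v : ℤ)) ≤ (n : ℤ) * ((n : ℤ) - 2) :=
      aux_int _ _ (by exact_mod_cast heven)
    have hre : 4 * ((G.dist u v : ℝ)) * ((n : ℝ) - 1 - (G.dist u v : ℝ)) ≤ (n : ℝ) * ((n : ℝ) - 2) := by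
      exact_mod_cast hint
    rw [div_le_iff₀ hn1]
    have he : (((n:ℝ) - 1)/4 - 1/(4*(n:ℝ) - 4)) * ((n:ℝ) - 1) = (n:ℝ)*((n:ℝ) - 2)/4 := by
      have h44 : (4 : ℝ) * (n : ℝ) - 4 ≠ 0 := by nlinarith
      field_simp
      ring
    rw [he]
    linarith [hre]
end

section
/- Let G be a connected graph of order n ≥ 3. Then diam(G) − π(G) ≤ (3n−5)/4 if n is odd, and diam(G) − π(G) ≤ (3n−5)/4 − 1/(4n−4) if n is even. -/
/-!
Let `u, v` realise the diameter `D` and let `u = p₀, …, p_D = v` be a geodesic. For any vertex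
`x`, the triangle inequality gives `d(x, pᵢ) + d(x, p_{D-i}) ≥ |D - 2i|`, so summing over `i`
the path contributes at least `⌊(D + 1)² / 4⌋ = ⌊(D + 1) / 2⌋ * (⌊D / 2⌋ + 1)` to the transmission
of `x`, and every vertex off the path other than `x` contributes at least `1`. This bounds
`π(G)` from below by `(⌊(D + 1)² / 4⌋ + max(n - D - 2, 0)) / (n - 1)`, and the claim becomes a
polynomial inequality in `D` and `n`, checked according to the parity of `D` and whether
`D = n - 1`.
-/

open Finset

namespace SimpleGraph

variable {V : Type*} {G : SimpleGraph V} {u v : V}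

lemma dist_lt_card [Fintype V] (u v : V) : G.dist u v < Fintype.card V := by
  by_cases h : G.Reachable u v
  · obtain ⟨p, hp⟩ := h.exists_walk_length_eq_dist
    exact hp ▸ (p.isPath_of_length_eq_dist hp).length_lt
  · rw [dist_eq_zero_of_not_reachable h]
    exact Fintype.card_pos_iff.mpr ⟨u⟩

lemma Walk.dist_getVert_getVert_of_length_eq_dist {p : G.Walk u v}
    (hp : p.length = G.dist u v) {i j : ℕ} (hi : i ≤ p.length) (hj : j ≤ p.length) :
    (G.dist (p.getVert i) (p.getVert j) : ℤ) = |(j : ℤ) - i| := by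
  wlog hij : i ≤ j generalizing i j
  · rw [dist_comm, this hj hi (by omega), abs_sub_comm]
  have hsub : ((p.drop i).take (j - i)).IsSubwalk p :=
    (isSubwalk_take _ _).trans (isSubwalk_drop _ _)
  have := length_eq_dist_of_subwalk hp hsub
  rw [take_length, drop_length, drop_getVert, Nat.add_sub_cancel' hij] at this
  rw [← this, abs_of_nonneg (by omega)]
  omega

lemma Walk.injOn_getVert_of_length_eq_dist {p : G.Walk u v} (hp : p.length = G.dist u v) :
    Set.InjOn p.getVert (range (p.length + 1)) := by
  intro i hi j hj hij
  have := p.dist_getVert_getVert_of_length_eq_dist hp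
    (Nat.lt_succ_iff.mp (mem_range.mp hi)) (Nat.lt_succ_iff.mp (mem_range.mp hj))
  rw [hij, dist_self, Nat.cast_zero, eq_comm, abs_eq_zero, sub_eq_zero] at this
  exact_mod_cast this.symm

theorem sum_range_abs_sub_two_mul (D : ℕ) :
    ∑ i ∈ range (D + 1), |(D : ℤ) - 2 * i| = 2 * ((D + 1) / 2 * (D / 2 + 1) : ℕ) := by
  induction D using Nat.twoStepInduction with
  | zero => simp
  | one => simp [sum_range_succ]
  | more D ih _ =>
    rw [sum_range_succ, sum_range_succ']
    have hshift : ∀ i ∈ range (D + 1),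
        |((D + 2 : ℕ) : ℤ) - 2 * ((i + 1 : ℕ) : ℤ)| = |(D : ℤ) - 2 * i| := fun i _ => by
      push_cast
      ring_nf
    have hends : |((D + 2 : ℕ) : ℤ) - 2 * ((0 : ℕ) : ℤ)| +
        |((D + 2 : ℕ) : ℤ) - 2 * ((D + 2 : ℕ) : ℤ)| = 2 * ((D + 2 : ℕ) : ℤ) := by
      rw [abs_of_nonneg (by push_cast; linarith), abs_of_nonpos (by push_cast; linarith)]
      ring
    have hclosed :
        (D + 1) / 2 * (D / 2 + 1) + (D + 2) = (D + 2 + 1) / 2 * ((D + 2) / 2 + 1) := by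
      have : (D + 1) / 2 + D / 2 = D := by omega
      rw [show (D + 2 + 1) / 2 = (D + 1) / 2 + 1 by omega, show (D + 2) / 2 = D / 2 + 1 by omega]
      linarith
    rw [sum_congr rfl hshift, ih, add_assoc, hends, ← hclosed]
    push_cast
    ring

lemma Walk.sum_dist_getVert_ge (hconn : G.Connected) {p : G.Walk u v}
    (hp : p.length = G.dist u v) (x : V) :
    (p.length + 1) / 2 * (p.length / 2 + 1) ≤
      ∑ i ∈ range (p.length + 1), G.dist x (p.getVert i) := by
  set D := p.length
  have hpair : ∀ i ∈ range (D + 1), |(D : ℤ) - 2 * i| ≤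
      (G.dist x (p.getVert i) : ℤ) + G.dist x (p.getVert (D - i)) := fun i hi => by
    have hi : i ≤ D := Nat.lt_succ_iff.mp (mem_range.mp hi)
    have hgeo := p.dist_getVert_getVert_of_length_eq_dist hp hi (Nat.sub_le D i)
    have htri : G.dist (p.getVert i) (p.getVert (D - i)) ≤
        G.dist (p.getVert i) x + G.dist x (p.getVert (D - i)) := hconn.dist_triangle
    rw [Nat.cast_sub hi, show (D : ℤ) - i - i = D - 2 * i by ring] at hgeo
    have hcomm : G.dist (p.getVert i) x = G.dist x (p.getVert i) := dist_comm
    omega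
  have hreflect : ∑ i ∈ range (D + 1), (G.dist x (p.getVert (D - i)) : ℤ) =
      ∑ i ∈ range (D + 1), (G.dist x (p.getVert i) : ℤ) :=
    sum_range_reflect (fun i ↦ (G.dist x (p.getVert i) : ℤ)) (D + 1)
  have hdouble : 2 * (((D + 1) / 2 * (D / 2 + 1) : ℕ) : ℤ) ≤
      2 * ∑ i ∈ range (D + 1), (G.dist x (p.getVert i) : ℤ) :=
    calc _ = ∑ i ∈ range (D + 1), |(D : ℤ) - 2 * i| := (sum_range_abs_sub_two_mul D).symm
      _ ≤ ∑ i ∈ range (D + 1),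
          ((G.dist x (p.getVert i) : ℤ) + G.dist x (p.getVert (D - i))) := sum_le_sum hpair
      _ = _ := by rw [sum_add_distrib, hreflect, two_mul]
  exact_mod_cast le_of_mul_le_mul_left hdouble two_pos

lemma Connected.card_erase_le_sum_dist [DecidableEq V] (hconn : G.Connected) (s : Finset V)
    (x : V) : #(s.erase x) ≤ ∑ w ∈ s, G.dist x w :=
  calc #(s.erase x) = ∑ _w ∈ s.erase x, 1 := card_eq_sum_ones _
    _ ≤ ∑ w ∈ s.erase x, G.dist x w :=
      sum_le_sum fun _ hw ↦ hconn.pos_dist_of_ne (ne_of_mem_erase hw).symm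
    _ ≤ ∑ w ∈ s, G.dist x w := sum_le_sum_of_subset (erase_subset _ _)

lemma Connected.sum_dist_ge [Fintype V] [DecidableEq V] (hconn : G.Connected) (u v x : V) :
    (G.dist u v + 1) / 2 * (G.dist u v / 2 + 1) + (Fintype.card V - (G.dist u v + 2)) ≤
      ∑ w, G.dist x w := by
  obtain ⟨p, hp⟩ := hconn.exists_walk_length_eq_dist u v
  rw [← hp]
  set P := (range (p.length + 1)).image p.getVert
  have hinj := p.injOn_getVert_of_length_eq_dist hp
  have hcard : #P = p.length + 1 := by rw [card_image_of_injOn hinj, card_range]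
  calc _ ≤ ∑ i ∈ range (p.length + 1), G.dist x (p.getVert i) + #(Pᶜ.erase x) := by
        gcongr
        · exact p.sum_dist_getVert_ge hconn hp x
        · have := pred_card_le_card_erase (s := Pᶜ) (a := x)
          rw [card_compl, hcard] at this
          omega
    _ ≤ ∑ w ∈ P, G.dist x w + ∑ w ∈ Pᶜ, G.dist x w := by
        rw [sum_image hinj]
        gcongr
        exact hconn.card_erase_le_sum_dist _ x
    _ = ∑ w, G.dist x w := sum_add_sum_compl P _

end SimpleGraph

lemma four_mul_mul_sub_one_le {D n : ℕ} (hDn : D + 1 ≤ n) :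
    4 * (D : ℝ) * (n - 1) ≤
        (3 * n - 5) * (n - 1) + 4 * ((D + 1) / 2 * (D / 2 + 1) + (n - (D + 2)) : ℕ) ∧
      (Even n → 4 * (D : ℝ) * (n - 1) + 1 ≤
        (3 * n - 5) * (n - 1) + 4 * ((D + 1) / 2 * (D / 2 + 1) + (n - (D + 2)) : ℕ)) := by
  obtain ⟨k, rfl⟩ := Nat.exists_eq_add_of_le hDn
  rw [show D + 1 + k - (D + 2) = k - 1 by omega]
  obtain ⟨m, rfl | rfl⟩ := Nat.even_or_odd' D
  · rw [show (2 * m + 1) / 2 = m by omega, show 2 * m / 2 = m by omega]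
    rcases k with _ | k
    · refine ⟨by push_cast; nlinarith, fun h ↦ absurd h (by simp [parity_simps])⟩
    · push_cast [Nat.add_sub_cancel]
      exact ⟨by nlinarith, fun _ ↦ by nlinarith⟩
  · rw [show (2 * m + 1 + 1) / 2 = m + 1 by omega, show (2 * m + 1) / 2 = m by omega]
    rcases k with _ | k <;> push_cast [Nat.add_sub_cancel] <;>
      exact ⟨by nlinarith, fun _ ↦ by nlinarith⟩

lemma sub_div_le_sub_div_of_four_mul_le {n D c e : ℝ} (hn : 1 < n)
    (h : 4 * D * (n - 1) + e ≤ (3 * n - 5) * (n - 1) + 4 * c) :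
    D - c / (n - 1) ≤ (3 * n - 5) / 4 - e / (4 * n - 4) := by
  have hn1 : n - 1 ≠ 0 := by linarith
  have hgap : (3 * n - 5) / 4 - e / (4 * n - 4) - (D - c / (n - 1)) =
      ((3 * n - 5) * (n - 1) + 4 * c - (4 * D * (n - 1) + e)) / (4 * (n - 1)) := by
    rw [show 4 * n - 4 = 4 * (n - 1) by ring]
    field_simp
    ring
  have : 0 ≤ ((3 * n - 5) * (n - 1) + 4 * c - (4 * D * (n - 1) + e)) / (4 * (n - 1)) :=
    div_nonneg (by linarith) (by linarith)
  linarith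

theorem stmt1_general {V : Type*} [Fintype V] [DecidableEq V] (G : SimpleGraph V)
    (n : ℕ) (hn : Fintype.card V = n) (hconn : G.Connected) (h3 : 3 ≤ n) :
    (Odd n → (((Finset.univ.sup fun v : V => Finset.univ.sup fun w : V => G.dist v w) : ℕ) : ℝ) - (⨅ v : V, (∑ w : V, (G.dist v w : ℝ)) / ((n : ℝ) - 1)) ≤ (3 * (n : ℝ) - 5) / 4) ∧
    (Even n → (((Finset.univ.sup fun v : V => Finset.univ.sup fun w : V => G.dist v w) : ℕ) : ℝ) - (⨅ v : V, (∑ w : V, (G.dist v w : ℝ)) / ((n : ℝ) - 1)) ≤ (3 * (n : ℝ) - 5) / 4 - 1 / (4 * (n : ℝ) - 4)) := by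
  have : Nonempty V := Fintype.card_pos_iff.mp (by omega)
  obtain ⟨⟨u, v⟩, -, huv⟩ := exists_mem_eq_sup (univ ×ˢ univ)
    (univ_nonempty.product univ_nonempty) fun p : V × V ↦ G.dist p.1 p.2
  rw [sup_product_left] at huv
  set D := Finset.univ.sup fun v : V => Finset.univ.sup fun w : V => G.dist v w
  have hn1 : (1 : ℝ) < n := by norm_cast; omega
  have hprox : (((D + 1) / 2 * (D / 2 + 1) + (n - (D + 2)) : ℕ) : ℝ) / (n - 1) ≤
      ⨅ x : V, (∑ w : V, (G.dist x w : ℝ)) / ((n : ℝ) - 1) :=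
    le_ciInf fun x ↦ div_le_div_of_nonneg_right
      (by exact_mod_cast hn ▸ huv ▸ hconn.sum_dist_ge u v x) (by linarith)
  have hDn : D + 1 ≤ n := hn ▸ huv ▸ G.dist_lt_card u v
  obtain ⟨hodd, heven⟩ := four_mul_mul_sub_one_le hDn
  refine ⟨fun _ ↦ ?_, fun he ↦ ?_⟩
  · have := sub_div_le_sub_div_of_four_mul_le (e := 0) hn1 (by simpa only [add_zero] using hodd)
    rw [zero_div, sub_zero] at this
    linarith
  · linarith [sub_div_le_sub_div_of_four_mul_le hn1 (heven he)]

theorem stmt1 {V : Type*} [Fintype V] [DecidableEq V] (G : SimpleGraph V)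
    [DecidableRel G.Adj] (n : ℕ) (hn : Fintype.card V = n) (hconn : G.Connected) (h3 : 3 ≤ n) :
    (Odd n → (((Finset.univ.sup fun v : V => Finset.univ.sup fun w : V => G.dist v w) : ℕ) : ℝ) - (⨅ v : V, (∑ w : V, (G.dist v w : ℝ)) / ((n : ℝ) - 1)) ≤ (3 * (n : ℝ) - 5) / 4) ∧
    (Even n → (((Finset.univ.sup fun v : V => Finset.univ.sup fun w : V => G.dist v w) : ℕ) : ℝ) - (⨅ v : V, (∑ w : V, (G.dist v w : ℝ)) / ((n : ℝ) - 1)) ≤ (3 * (n : ℝ) - 5) / 4 - 1 / (4 * (n : ℝ) - 4)) :=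
  stmt1_general G n hn hconn h3
end

section
/- Let G be a connected graph of order n ≥ 3. Then rad(G) − π(G) ≤ (n−1)/4 − 1/(n−1) if n is odd, and rad(G) − π(G) ≤ (n−1)/4 − 1/(4n−4) if n is even. -/
open SimpleGraph Finset

private lemma walk_dist_le {V : Type*} {G : SimpleGraph V} (hconn : G.Connected) {u v : V}
    (p : G.Walk u v) : ∀ c a, a + c ≤ p.length → G.dist (p.getVert a) (p.getVert (a + c)) ≤ c := by
  intro c
  induction c with
  | zero => intro a _; simp [SimpleGraph.dist_self]
  | succ c ih =>
    intro a h
    have h1 : G.dist (p.getVert a) (p.getVert (a + c)) ≤ c := ih a (by omega)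
    have h2 : G.dist (p.getVert (a + c)) (p.getVert (a + c + 1)) = 1 :=
      SimpleGraph.dist_eq_one_iff_adj.mpr (p.adj_getVert_succ (by omega))
    have h3 := hconn.dist_triangle (u := p.getVert a) (v := p.getVert (a + c))
      (w := p.getVert (a + c + 1))
    have h4 : a + (c + 1) = a + c + 1 := by omega
    rw [h4]
    omega

private lemma walk_dist_le' {V : Type*} {G : SimpleGraph V} (hconn : G.Connected) {u v : V}
    (p : G.Walk u v) {a b : ℕ} (hab : a ≤ b) (hb : b ≤ p.length) :
    G.dist (p.getVert a) (p.getVert b) ≤ b - a := by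
  have := walk_dist_le hconn p (b - a) a (by omega)
  rwa [Nat.add_sub_cancel' hab] at this

private lemma geodesic_dist {V : Type*} {G : SimpleGraph V} (hconn : G.Connected) {u v : V}
    (p : G.Walk u v) (hp : p.length = G.dist u v) {a : ℕ} (ha : a ≤ p.length) :
    G.dist u (p.getVert a) = a := by
  have hle : G.dist u (p.getVert a) ≤ a := by
    have := walk_dist_le' hconn p (Nat.zero_le a) ha
    simpa using this
  have h2 : G.dist (p.getVert a) v ≤ p.length - a := by
    have := walk_dist_le' hconn p ha le_rfl
    simpa using this
  have h3 := hconn.dist_triangle (u := u) (v := p.getVert a) (w := v)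
  omega

private lemma key {V : Type*} [Fintype V] [DecidableEq V] {G : SimpleGraph V}
    (hconn : G.Connected) (r : ℕ)
    (hr : ∀ y : V, r ≤ Finset.univ.sup fun w => G.dist y w) (v : V) {k : ℕ}
    (hk1 : 1 ≤ k) (hkr : k ≤ r) :
    2 * (r - k) + 1 ≤ (Finset.univ.filter fun w => k ≤ G.dist v w).card := by
  by_contra hcon
  push_neg at hcon
  have hne : Nonempty V := ⟨v⟩
  set F := (Finset.univ.filter fun w => k ≤ G.dist v w) with hF
  have hFcard : F.card ≤ 2 * (r - k) := by omega
  set e := Finset.univ.sup (fun w => G.dist v w) with he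
  obtain ⟨z, -, hz⟩ := Finset.exists_mem_eq_sup (Finset.univ) Finset.univ_nonempty
    (fun w => G.dist v w)
  rw [← he] at hz
  have hre : r ≤ e := hr v
  have hdve : ∀ w, G.dist v w ≤ e := fun w => Finset.le_sup (Finset.mem_univ w)
  obtain ⟨p, hp⟩ := hconn.exists_walk_length_eq_dist v z
  have hplen : p.length = e := by rw [hp, ← hz]
  have hxd : ∀ a, a ≤ e → G.dist v (p.getVert a) = a := by
    intro a ha
    exact geodesic_dist hconn p hp (by omega)
  set X := (Finset.range (e + 1)).image p.getVert with hX
  have hmemX : ∀ w, w ∈ X → ∃ a, a ≤ e ∧ w = p.getVert a := by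
    intro w hw
    obtain ⟨a, haR, hwa⟩ := Finset.mem_image.mp hw
    exact ⟨a, Nat.lt_succ_iff.mp (Finset.mem_range.mp haR), hwa.symm⟩
  have hvX : v ∈ X := Finset.mem_image.mpr ⟨0, by simp, p.getVert_zero⟩
  have hTsub : (Finset.Icc k e).image p.getVert ⊆ F ∩ X := by
    intro w hw
    obtain ⟨a, haI, hwa⟩ := Finset.mem_image.mp hw
    obtain ⟨hka, hae⟩ := Finset.mem_Icc.mp haI
    refine Finset.mem_inter.mpr ⟨?_, ?_⟩
    · refine Finset.mem_filter.mpr ⟨Finset.mem_univ _, ?_⟩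
      rw [← hwa, hxd a hae]; exact hka
    · exact Finset.mem_image.mpr ⟨a, Finset.mem_range.mpr (by omega), hwa⟩
  have hTcard : ((Finset.Icc k e).image p.getVert).card = e + 1 - k := by
    rw [Finset.card_image_of_injOn, Nat.card_Icc]
    intro a ha b hb hab
    have ha' := (Finset.mem_Icc.mp ha).2
    have hb' := (Finset.mem_Icc.mp hb).2
    have : G.dist v (p.getVert a) = G.dist v (p.getVert b) := by rw [hab]
    rwa [hxd a ha', hxd b hb'] at this
  have hFX : e + 1 - k ≤ (F ∩ X).card := by
    rw [← hTcard]; exact Finset.card_le_card hTsub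
  have hsd := Finset.card_sdiff_add_card_inter F X
  have hke : k ≤ e := le_trans hkr hre
  have he2 : e + k + 1 ≤ 2 * r := by omega
  set c' := (F \ X).card with hc'def
  have hc' : c' + (e + 1 - k) ≤ 2 * (r - k) := by omega
  set l := e - r + 1 with hl
  have hle' : l ≤ e := by omega
  set y := p.getVert l with hy
  have hyv : G.dist y v ≤ l := by
    have := walk_dist_le' hconn p (Nat.zero_le l) (by omega)
    rw [p.getVert_zero] at this
    rw [hy, SimpleGraph.dist_comm]
    simpa using this
  have hbound : ∀ w, G.dist y w ≤ r - 1 := by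
    intro w
    by_cases hwX : w ∈ X
    · obtain ⟨a, hae, rfl⟩ := hmemX w hwX
      rw [hy]
      rcases le_total l a with h | h
      · have := walk_dist_le' hconn p h (by omega)
        omega
      · have := walk_dist_le' hconn p h (by omega)
        rw [SimpleGraph.dist_comm] at this
        omega
    · by_cases hwF : k ≤ G.dist v w
      · -- w is a "stray" far vertex, off the geodesic
        set t := G.dist v w with ht
        have htk : k ≤ t := hwF
        have hte : t ≤ e := hdve w
        obtain ⟨q, hq⟩ := hconn.exists_walk_length_eq_dist v w
        have hqt : q.length = t := by rw [hq, ← ht]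
        have hqd : ∀ a, a ≤ t → G.dist v (q.getVert a) = a := by
          intro a ha
          exact geodesic_dist hconn q hq (by omega)
        set A := (Finset.range (t + 1)).filter (fun a => q.getVert a ∈ X) with hA
        have hA0 : 0 ∈ A := by
          refine Finset.mem_filter.mpr ⟨Finset.mem_range.mpr (by omega), ?_⟩
          rw [q.getVert_zero]; exact hvX
        have hAne : A.Nonempty := ⟨0, hA0⟩
        set s := A.max' hAne with hs
        have hsA : s ∈ A := A.max'_mem hAne
        have hst : s ≤ t := by
          have := Finset.mem_range.mp (Finset.mem_filter.mp hsA).1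
          omega
        have hsX : q.getVert s ∈ X := (Finset.mem_filter.mp hsA).2
        obtain ⟨a', ha'e, ha'⟩ := hmemX _ hsX
        have ha's : a' = s := by
          have h1 := hqd s hst
          have h2 := hxd a' ha'e
          rw [← ha'] at h2
          omega
        have hse : s ≤ e := by omega
        have hqs : q.getVert s = p.getVert s := by rw [ha', ha's]
        -- counting strays
        have hUsub : ((Finset.Icc (max s (k - 1) + 1) t).image q.getVert) ⊆ F \ X := by
          intro w' hw'
          obtain ⟨a, haI, rfl⟩ := Finset.mem_image.mp hw'
          obtain ⟨haL, haR⟩ := Finset.mem_Icc.mp haI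
          refine Finset.mem_sdiff.mpr ⟨Finset.mem_filter.mpr ⟨Finset.mem_univ _, ?_⟩, ?_⟩
          · rw [hqd a (by omega)]; omega
          · intro hXa
            have haA : a ∈ A := Finset.mem_filter.mpr ⟨Finset.mem_range.mpr (by omega), hXa⟩
            have := Finset.le_max' A a haA
            omega
        have hUcard : ((Finset.Icc (max s (k - 1) + 1) t).image q.getVert).card
            = t - max s (k - 1) := by
          rw [Finset.card_image_of_injOn, Nat.card_Icc]
          · omega
          · intro a ha b hb hab
            have ha' := (Finset.mem_Icc.mp ha).2
            have hb' := (Finset.mem_Icc.mp hb).2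
            have : G.dist v (q.getVert a) = G.dist v (q.getVert b) := by rw [hab]
            rwa [hqd a (by omega), hqd b (by omega)] at this
        have hstray : t - max s (k - 1) ≤ c' := by
          rw [← hUcard, hc'def]
          exact Finset.card_le_card hUsub
        -- distance estimates
        have hyps : G.dist y (p.getVert s) ≤ max (s - l) (l - s) := by
          rw [hy]
          rcases le_total l s with h | h
          · have := walk_dist_le' hconn p h (by omega); omega
          · have := walk_dist_le' hconn p h (by omega)
            rw [SimpleGraph.dist_comm] at this; omega
        have hpsw : G.dist (p.getVert s) w ≤ t - s := by
          rw [← hqs]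
          have := walk_dist_le' hconn q (show s ≤ q.length by omega) le_rfl
          rw [q.getVert_length] at this
          omega
        have htri : G.dist y w ≤ G.dist y (p.getVert s) + G.dist (p.getVert s) w :=
          hconn.dist_triangle
        have htriv : G.dist y w ≤ G.dist y v + G.dist v w := hconn.dist_triangle
        omega
      · have hvw : G.dist v w ≤ k - 1 := by omega
        have h3 := hconn.dist_triangle (u := y) (v := v) (w := w)
        omega
  have hcontr : r ≤ r - 1 := le_trans (hr y) (Finset.sup_le fun w _ => hbound w)
  omega


private lemma odd_sum : ∀ N : ℕ, ∑ i ∈ Finset.range N, (2 * i + 1) = N * N := by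
  intro N
  induction N with
  | zero => simp
  | succ m ih => rw [Finset.sum_range_succ, ih]; ring

private lemma sq_sum (r : ℕ) : ∑ k ∈ Finset.Icc 2 r, (2 * (r - k) + 1) = (r - 1) * (r - 1) := by
  rw [← odd_sum (r - 1)]
  refine Finset.sum_nbij' (fun k => r - k) (fun i => r - i) ?_ ?_ ?_ ?_ ?_
  · intro a ha; rw [Finset.mem_Icc] at ha; rw [Finset.mem_range]; omega
  · intro a ha; rw [Finset.mem_range] at ha; rw [Finset.mem_Icc]; omega
  · intro a ha; rw [Finset.mem_Icc] at ha; omega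
  · intro a ha; rw [Finset.mem_range] at ha; omega
  · intro a _; rfl

private lemma sum_dist_ge {V : Type*} [Fintype V] [DecidableEq V] {G : SimpleGraph V}
    (hconn : G.Connected) (r : ℕ) (hr1 : 1 ≤ r) (v : V)
    (hkey : ∀ k, 1 ≤ k → k ≤ r →
       2 * (r - k) + 1 ≤ (Finset.univ.filter fun w => k ≤ G.dist v w).card) :
    (Fintype.card V - 1) + (r - 1) * (r - 1) ≤ ∑ w : V, G.dist v w := by
  classical
  set D : ℕ → ℕ := fun k => (Finset.univ.filter fun w => k ≤ G.dist v w).card with hD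
  -- step 1 : ∑_{k=1}^r D k ≤ ∑ dist
  have h1 : ∑ k ∈ Finset.Icc 1 r, D k ≤ ∑ w : V, G.dist v w := by
    have hcf : ∀ k, D k = ∑ w : V, if k ≤ G.dist v w then 1 else 0 := by
      intro k; rw [hD]; exact Finset.card_filter _ _
    calc ∑ k ∈ Finset.Icc 1 r, D k
        = ∑ k ∈ Finset.Icc 1 r, ∑ w : V, if k ≤ G.dist v w then 1 else 0 := by
          exact Finset.sum_congr rfl fun k _ => hcf k
      _ = ∑ w : V, ∑ k ∈ Finset.Icc 1 r, if k ≤ G.dist v w then 1 else 0 :=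
          Finset.sum_comm
      _ ≤ ∑ w : V, G.dist v w := by
          refine Finset.sum_le_sum fun w _ => ?_
          rw [← Finset.card_filter]
          calc ((Finset.Icc 1 r).filter fun k => k ≤ G.dist v w).card
              ≤ (Finset.Icc 1 (G.dist v w)).card := by
                refine Finset.card_le_card fun k hk => ?_
                rw [Finset.mem_filter, Finset.mem_Icc] at hk
                rw [Finset.mem_Icc]
                omega
            _ = G.dist v w := by rw [Nat.card_Icc]; omega
  -- step 2 : split off k = 1
  have hsplit : Finset.Icc 1 r = insert 1 (Finset.Icc 2 r) := by
    ext a; simp only [Finset.mem_Icc, Finset.mem_insert]; omega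
  have hnotmem : (1 : ℕ) ∉ Finset.Icc 2 r := by simp
  have h2 : ∑ k ∈ Finset.Icc 1 r, D k = D 1 + ∑ k ∈ Finset.Icc 2 r, D k := by
    rw [hsplit, Finset.sum_insert hnotmem]
  -- step 3 : D 1 ≥ n - 1
  have h3 : Fintype.card V - 1 ≤ D 1 := by
    rw [hD]
    have : Finset.univ.erase v ⊆ Finset.univ.filter fun w => 1 ≤ G.dist v w := by
      intro w hw
      rw [Finset.mem_erase] at hw
      refine Finset.mem_filter.mpr ⟨Finset.mem_univ _, ?_⟩
      exact hconn.pos_dist_of_ne (Ne.symm hw.1)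
    have := Finset.card_le_card this
    rwa [Finset.card_erase_of_mem (Finset.mem_univ v), Finset.card_univ] at this
  -- step 4 : tail sum
  have h4 : (r - 1) * (r - 1) ≤ ∑ k ∈ Finset.Icc 2 r, D k := by
    rw [← sq_sum r]
    refine Finset.sum_le_sum fun k hk => ?_
    rw [Finset.mem_Icc] at hk
    exact hkey k (by omega) hk.2
  omega


theorem stmt2 {V : Type*} [Fintype V] [DecidableEq V] (G : SimpleGraph V)
    [DecidableRel G.Adj] (n : ℕ) (hn : Fintype.card V = n) (hconn : G.Connected) (h3 : 3 ≤ n) :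
    (Odd n → (((⨅ v : V, Finset.univ.sup fun w : V => G.dist v w) : ℕ) : ℝ) - (⨅ v : V, (∑ w : V, (G.dist v w : ℝ)) / ((n : ℝ) - 1)) ≤ ((n : ℝ) - 1) / 4 - 1 / ((n : ℝ) - 1)) ∧
    (Even n → (((⨅ v : V, Finset.univ.sup fun w : V => G.dist v w) : ℕ) : ℝ) - (⨅ v : V, (∑ w : V, (G.dist v w : ℝ)) / ((n : ℝ) - 1)) ≤ ((n : ℝ) - 1) / 4 - 1 / (4 * (n : ℝ) - 4)) := by
  classical
  have hkey : ∀ r : ℕ, (∀ y : V, r ≤ Finset.univ.sup fun w : V => G.dist y w) → ∀ (v : V) (k : ℕ),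
      1 ≤ k → k ≤ r → 2 * (r - k) + 1 ≤ (Finset.univ.filter fun w => k ≤ G.dist v w).card :=
    fun r hr v k hk1 hkr => key hconn r hr v hk1 hkr
  have hSg : ∀ r : ℕ, 1 ≤ r → ∀ v : V,
      (∀ k, 1 ≤ k → k ≤ r → 2 * (r - k) + 1 ≤ (Finset.univ.filter fun w => k ≤ G.dist v w).card)
      → (Fintype.card V - 1) + (r - 1) * (r - 1) ≤ ∑ w : V, G.dist v w :=
    fun r hr1 v h => sum_dist_ge hconn r hr1 v h
  have hNe : Nonempty V := by rw [← Fintype.card_pos_iff]; omega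
  obtain ⟨m, rfl⟩ : ∃ m, n = m + 1 := ⟨n - 1, by omega⟩
  set r := ⨅ v : V, Finset.univ.sup fun w : V => G.dist v w with hrdef
  have hrle : ∀ y : V, r ≤ Finset.univ.sup fun w : V => G.dist y w := by
    intro y
    rw [hrdef, iInf]
    exact Nat.sInf_le ⟨y, rfl⟩
  have hattain : ∃ v₀ : V, (Finset.univ.sup fun w : V => G.dist v₀ w) = r := by
    have : r ∈ Set.range (fun v : V => Finset.univ.sup fun w : V => G.dist v w) := by
      rw [hrdef, iInf]
      exact Nat.sInf_mem (Set.range_nonempty _)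
    exact this.imp fun v h => h
  have hr1 : 1 ≤ r := by
    obtain ⟨v₀, hv₀⟩ := hattain
    obtain ⟨w₀, hw₀⟩ := Fintype.exists_ne_of_one_lt_card (by omega) v₀
    have h1 : 1 ≤ G.dist v₀ w₀ := hconn.pos_dist_of_ne (Ne.symm hw₀)
    have h2 : G.dist v₀ w₀ ≤ Finset.univ.sup fun w : V => G.dist v₀ w :=
      Finset.le_sup (Finset.mem_univ w₀)
    omega
  -- n ≥ 2r
  have hm2r : 2 * r ≤ m + 1 := by
    obtain ⟨v₀⟩ := hNe
    have hk := hkey r hrle v₀ 1 le_rfl hr1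
    have hsub : (Finset.univ.filter fun w => 1 ≤ G.dist v₀ w) ⊆ Finset.univ.erase v₀ := by
      intro w hw
      rw [Finset.mem_filter] at hw
      refine Finset.mem_erase.mpr ⟨?_, Finset.mem_univ _⟩
      intro hwv
      subst hwv
      rw [SimpleGraph.dist_self] at hw
      omega
    have hcard := Finset.card_le_card hsub
    rw [Finset.card_erase_of_mem (Finset.mem_univ v₀), Finset.card_univ, hn] at hcard
    omega
  -- per-vertex sums
  have hS : ∀ v : V, m + (r - 1) * (r - 1) ≤ ∑ w : V, G.dist v w := by
    intro v
    have := hSg r hr1 v (fun k hk1 hkr => hkey r hrle v k hk1 hkr)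
    rwa [hn, Nat.add_sub_cancel] at this
  clear_value r
  obtain ⟨r₀, rfl⟩ : ∃ r₀, r = r₀ + 1 := ⟨r - 1, by omega⟩
  have hmpos : (0:ℝ) < ((m + 1 : ℕ) : ℝ) - 1 := by
    have : (3:ℝ) ≤ ((m + 1 : ℕ) : ℝ) := by exact_mod_cast h3
    linarith
  have hmR : ((m + 1 : ℕ) : ℝ) - 1 = (m : ℝ) := by push_cast; ring
  have hm0 : (m:ℝ) ≠ 0 := by
    have : (2:ℕ) ≤ m := by omega
    have : (2:ℝ) ≤ (m:ℝ) := by exact_mod_cast this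
    linarith
  have hmpos' : (0:ℝ) < (m:ℝ) := by rw [hmR] at hmpos; exact hmpos
  constructor
  · -- odd n, ε = 4
    intro hodd
    have hq : 2 * (r₀ + 1) ≤ m := by
      obtain ⟨j, hj⟩ := hodd
      omega
    have hπ : ((r₀ + 1 : ℕ) : ℝ) - (((m:ℝ))/4 - 1/(m:ℝ)) ≤
        ⨅ v : V, (∑ w : V, (G.dist v w : ℝ)) / (((m + 1 : ℕ) : ℝ) - 1) := by
      apply le_ciInf
      intro v
      have hNat : 4 * (r₀ + 1) * m + 4 ≤ 4 * (∑ w : V, G.dist v w) + m * m := by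
        have h1 := hS v
        rw [Nat.add_sub_cancel] at h1
        zify at h1 hq ⊢
        nlinarith [sq_nonneg ((m:ℤ) - 2 * r₀ - 2)]
      have hcast : (4 * (((r₀:ℝ)) + 1) * (m:ℝ) + 4) ≤
          4 * (∑ w : V, (G.dist v w : ℝ)) + (m:ℝ) * (m:ℝ) := by
        exact_mod_cast hNat
      rw [hmR, le_div_iff₀ hmpos']
      have hexp : (((r₀ + 1 : ℕ) : ℝ) - ((m:ℝ)/4 - 1/(m:ℝ))) * (m:ℝ)
          = ((r₀:ℝ) + 1) * (m:ℝ) - (m:ℝ) * (m:ℝ)/4 + 1 := by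
        push_cast
        field_simp
        ring
      rw [hexp]
      linarith [hcast]
    rw [hmR] at hπ ⊢
    linarith [hπ]
  · -- even n, ε = 1
    intro heven
    have hq : 2 * (r₀ + 1) ≤ m + 1 := hm2r
    have hπ : ((r₀ + 1 : ℕ) : ℝ) - (((m:ℝ))/4 - 1/(4*(m:ℝ))) ≤
        ⨅ v : V, (∑ w : V, (G.dist v w : ℝ)) / (((m + 1 : ℕ) : ℝ) - 1) := by
      apply le_ciInf
      intro v
      have hNat : 4 * (r₀ + 1) * m + 1 ≤ 4 * (∑ w : V, G.dist v w) + m * m := by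
        have h1 := hS v
        rw [Nat.add_sub_cancel] at h1
        zify at h1 hq ⊢
        nlinarith [sq_nonneg ((m:ℤ) - 2 * r₀ - 1)]
      have hcast : (4 * ((r₀:ℝ) + 1) * (m:ℝ) + 1) ≤
          4 * (∑ w : V, (G.dist v w : ℝ)) + (m:ℝ) * (m:ℝ) := by
        exact_mod_cast hNat
      rw [hmR, le_div_iff₀ hmpos']
      have hexp : (((r₀ + 1 : ℕ) : ℝ) - ((m:ℝ)/4 - 1/(4*(m:ℝ)))) * (m:ℝ)
          = ((r₀:ℝ) + 1) * (m:ℝ) - (m:ℝ) * (m:ℝ)/4 + 1/4 := by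
        push_cast
        field_simp
        ring
      rw [hexp]
      linarith [hcast]
    rw [hmR] at hπ ⊢
    have h4m : 1 / (4 * ((m + 1 : ℕ) : ℝ) - 4) = 1 / (4 * (m:ℝ)) := by
      push_cast
      ring_nf
    rw [h4m]
    linarith [hπ]
end

section
/- Let G be a connected graph of order n and minimum degree δ ≥ 2. Then ρ(G) − π(G) ≤ 3n/(4(δ+1)) + 3. -/
/-!
Let `u` and `z` maximise and minimise `σ(v) = ∑_w d(v, w)`, and put `d = d(z, u)`, so that
`σ(u) - σ(z) = n d - ∑_w (d + d(z, w) - d(u, w))` with every summand nonnegative.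
On a shortest `z`–`u` path the vertices `y_j` at distance `3j` from `z`, `1 ≤ j ≤ m = ⌊d / 3⌋`,
have pairwise disjoint closed neighbourhoods of at least `δ + 1` vertices each, and on the
neighbourhood of `y_j` the summand is at least `6j - 2`. Hence
`σ(u) - σ(z) ≤ n d - (δ + 1)(3m² + m)`, and maximising the right-hand side over `m` gives the bound.
-/

open Finset

lemma sum_Icc_six_mul_sub_two (m : ℕ) : ∑ j ∈ Icc 1 m, (6 * (j : ℤ) - 2) = 3 * m ^ 2 + m := by
  induction m with
  | zero => simp
  | succ m ih =>
    rw [sum_Icc_succ_top (by omega), ih]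
    push_cast
    ring

lemma mul_sub_mul_le_of_le_three_mul_add_two {n t d : ℝ} {m : ℕ} (ht : 3 ≤ t) (htn : t ≤ n)
    (hd : d ≤ 3 * m + 2) :
    n * d - t * (3 * m ^ 2 + m) ≤ (n - 1) * (3 * n / (4 * t) + 3) := by
  have ht0 : 0 < t := by linarith
  have hd' := mul_le_mul_of_nonneg_left hd (by nlinarith : 0 ≤ 4 * t * n)
  have key : 4 * t * (n * d - t * (3 * m ^ 2 + m)) ≤ (n - 1) * (3 * n + 12 * t) := by
    rcases Nat.eq_zero_or_pos m with rfl | hm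
    · simp only [CharP.cast_eq_zero, mul_zero, zero_add] at hd' ⊢
      nlinarith [mul_nonneg ht0.le (by linarith : 0 ≤ n - 3)]
    · have hm1 : (1 : ℝ) ≤ m := by exact_mod_cast hm
      nlinarith [sq_nonneg (3 * n - 6 * t * m),
        mul_nonneg (by linarith : 0 ≤ t - 3) (by linarith : 0 ≤ n),
        mul_nonneg (mul_nonneg ht0.le ht0.le) (sub_nonneg.mpr hm1),
        mul_nonneg ht0.le (by linarith : 0 ≤ t - 3)]
  calc n * d - t * (3 * m ^ 2 + m) = 4 * t * (n * d - t * (3 * m ^ 2 + m)) / (4 * t) := by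
        field_simp
    _ ≤ (n - 1) * (3 * n + 12 * t) / (4 * t) := by gcongr
    _ = (n - 1) * (3 * n / (4 * t) + 3) := by field_simp; ring

namespace SimpleGraph

variable {V : Type*} {G : SimpleGraph V}

lemma Walk.dist_getVert_of_length_eq_dist {u v : V} {p : G.Walk u v}
    (hp : p.length = G.dist u v) {k : ℕ} (hk : k ≤ p.length) :
    G.dist u (p.getVert k) = k := by
  rw [← length_eq_dist_of_subwalk hp (p.isSubwalk_take k), take_length, min_eq_left hk]

lemma Walk.dist_getVert_end_of_length_eq_dist {u v : V} {p : G.Walk u v}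
    (hp : p.length = G.dist u v) (k : ℕ) :
    G.dist (p.getVert k) v = G.dist u v - k := by
  rw [← length_eq_dist_of_subwalk hp (p.isSubwalk_drop k), drop_length, hp]

lemma Connected.two_mul_dist_add_dist_le (hconn : G.Connected) {u z y w : V}
    (hy : G.dist z y + G.dist y u = G.dist z u) (hyw : G.dist y w ≤ 1) :
    2 * G.dist z y + G.dist u w ≤ G.dist z u + G.dist z w + 2 := by
  have huw : G.dist u w ≤ G.dist u y + G.dist y w := hconn.dist_triangle
  have hzy : G.dist z y ≤ G.dist z w + G.dist w y := hconn.dist_triangle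
  rw [dist_comm (u := u) (v := y)] at huw
  rw [dist_comm (u := w) (v := y)] at hzy
  omega

section Finite

variable [Fintype V] [DecidableRel G.Adj] [DecidableEq V]

lemma dist_le_one_of_mem_insert_neighborFinset {v w : V}
    (hw : w ∈ insert v (G.neighborFinset v)) : G.dist v w ≤ 1 := by
  rcases mem_insert.mp hw with rfl | hadj
  · simp
  · exact (dist_eq_one_iff_adj.mpr ((mem_neighborFinset G v w).mp hadj)).le

lemma reachable_of_mem_insert_neighborFinset {v w : V}
    (hw : w ∈ insert v (G.neighborFinset v)) : G.Reachable v w := by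
  rcases mem_insert.mp hw with rfl | hadj
  · rfl
  · exact ((mem_neighborFinset G v w).mp hadj).reachable

lemma minDegree_add_one_le_card_insert_neighborFinset (v : V) :
    G.minDegree + 1 ≤ #(insert v (G.neighborFinset v)) := by
  rw [card_insert_of_notMem (by simp), card_neighborFinset_eq_degree]
  exact Nat.succ_le_succ (G.minDegree_le_degree v)

lemma disjoint_insert_neighborFinset {a b : V} (hab : 2 < G.dist a b) :
    Disjoint (insert a (G.neighborFinset a)) (insert b (G.neighborFinset b)) := by
  refine Finset.disjoint_left.mpr fun w ha hb ↦ ?_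
  have := (reachable_of_mem_insert_neighborFinset ha).dist_triangle_left b
  have := dist_le_one_of_mem_insert_neighborFinset ha
  have := dist_le_one_of_mem_insert_neighborFinset hb
  rw [dist_comm (u := b) (v := w)] at *
  omega

lemma Connected.minDegree_mul_le_sum_dist_add_dist_sub_dist (hconn : G.Connected) {z u : V}
    {m : ℕ} (hm : 3 * m ≤ G.dist z u) :
    ((G.minDegree : ℤ) + 1) * (3 * m ^ 2 + m) ≤
      ∑ w, ((G.dist z u : ℤ) + G.dist z w - G.dist u w) := by
  obtain ⟨p, hp⟩ := hconn.exists_walk_length_eq_dist z u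
  generalize hd : G.dist z u = d at hm
  set y : ℕ → V := fun j ↦ p.getVert (3 * j)
  set B : ℕ → Finset V := fun j ↦ insert (y j) (G.neighborFinset (y j))
  have hy : ∀ j ≤ m, G.dist z (y j) = 3 * j ∧ G.dist (y j) u = d - 3 * j := fun j hj ↦
    ⟨p.dist_getVert_of_length_eq_dist hp (by omega),
      by rw [p.dist_getVert_end_of_length_eq_dist hp, hd]⟩
  have hdisj : (Icc 1 m : Set ℕ).PairwiseDisjoint B := by
    intro i hi j hj hij
    simp only [coe_Icc, Set.mem_Icc] at hi hj
    apply disjoint_insert_neighborFinset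
    have := hconn.dist_triangle (u := z) (v := y i) (w := y j)
    have := hconn.dist_triangle (u := z) (v := y j) (w := y i)
    have := hy i hi.2
    have := hy j hj.2
    rw [dist_comm (u := y j) (v := y i)] at *
    omega
  have hnonneg : ∀ w, 0 ≤ (d : ℤ) + G.dist z w - G.dist u w := fun w ↦ by
    have : G.dist u w ≤ G.dist u z + G.dist z w := hconn.dist_triangle
    rw [dist_comm (u := u) (v := z)] at this
    omega
  have hB : ∀ j ∈ Icc 1 m, ∀ w ∈ B j, 6 * (j : ℤ) - 2 ≤ d + G.dist z w - G.dist u w := by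
    intro j hj w hw
    have hjm := (mem_Icc.mp hj).2
    have := hy j hjm
    have := hconn.two_mul_dist_add_dist_le (u := u) (z := z) (by omega)
      (dist_le_one_of_mem_insert_neighborFinset hw)
    omega
  calc ((G.minDegree : ℤ) + 1) * (3 * m ^ 2 + m)
      = ∑ j ∈ Icc 1 m, ((G.minDegree : ℤ) + 1) * (6 * (j : ℤ) - 2) := by
        rw [← mul_sum, sum_Icc_six_mul_sub_two]
    _ ≤ ∑ j ∈ Icc 1 m, ∑ w ∈ B j, (6 * (j : ℤ) - 2) := by
        gcongr with j hj
        rw [sum_const, nsmul_eq_mul]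
        have := (mem_Icc.mp hj).1
        gcongr
        · omega
        · exact_mod_cast minDegree_add_one_le_card_insert_neighborFinset _
    _ ≤ ∑ j ∈ Icc 1 m, ∑ w ∈ B j, ((d : ℤ) + G.dist z w - G.dist u w) :=
        sum_le_sum fun j hj ↦ sum_le_sum (hB j hj)
    _ = ∑ w ∈ (Icc 1 m).biUnion B, ((d : ℤ) + G.dist z w - G.dist u w) :=
        (sum_biUnion hdisj).symm
    _ ≤ ∑ w, ((d : ℤ) + G.dist z w - G.dist u w) := sum_le_univ_sum_of_nonneg hnonneg

end Finite

lemma Connected.sum_dist_sub_sum_dist_le [Fintype V] [DecidableRel G.Adj] (hconn : G.Connected)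
    (hδ : 2 ≤ G.minDegree) (u z : V) :
    ∑ w, (G.dist u w : ℝ) - ∑ w, (G.dist z w : ℝ) ≤
      (Fintype.card V - 1) * (3 * Fintype.card V / (4 * (G.minDegree + 1)) + 3) := by
  classical
  have := hconn.nonempty
  obtain ⟨m, hm, hdm⟩ : ∃ m, 3 * m ≤ G.dist z u ∧ G.dist z u ≤ 3 * m + 2 :=
    ⟨_, Nat.mul_div_le _ 3, by omega⟩
  have key := (Int.cast_le (R := ℝ)).mpr (hconn.minDegree_mul_le_sum_dist_add_dist_sub_dist hm)
  push_cast at key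
  rw [sum_sub_distrib, sum_add_distrib, sum_const, card_univ, nsmul_eq_mul] at key
  have hδn : (G.minDegree : ℝ) + 1 ≤ Fintype.card V := by exact_mod_cast G.minDegree_lt_card
  have hd : (G.dist z u : ℝ) ≤ 3 * m + 2 := by exact_mod_cast hdm
  have ht : (3 : ℝ) ≤ G.minDegree + 1 := by exact_mod_cast Nat.succ_le_succ hδ
  have := mul_sub_mul_le_of_le_three_mul_add_two ht hδn hd
  linarith

end SimpleGraph

theorem stmt3_general {V : Type*} [Fintype V] (G : SimpleGraph V)
    [DecidableRel G.Adj] (n δ : ℕ) (hn : Fintype.card V = n) (hδ : G.minDegree = δ) (hconn : G.Connected) (h2 : 2 ≤ δ) :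
    (⨆ v : V, (∑ w : V, (G.dist v w : ℝ)) / ((n : ℝ) - 1)) - (⨅ v : V, (∑ w : V, (G.dist v w : ℝ)) / ((n : ℝ) - 1)) ≤ 3 * (n : ℝ) / (4 * ((δ : ℝ) + 1)) + 3 := by
  subst hn hδ
  have := hconn.nonempty
  have hn : 1 < Fintype.card V := by linarith [G.minDegree_lt_card]
  set σ : V → ℝ := fun v ↦ (∑ w, (G.dist v w : ℝ)) / (Fintype.card V - 1)
  obtain ⟨u, hu⟩ := exists_eq_ciSup_of_finite (f := σ)
  obtain ⟨z, hz⟩ := exists_eq_ciInf_of_finite (f := σ)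
  rw [← hu, ← hz, div_sub_div_same, div_le_iff₀ (by simpa using hn), mul_comm]
  exact hconn.sum_dist_sub_sum_dist_le h2 u z

theorem stmt3 {V : Type*} [Fintype V] [DecidableEq V] (G : SimpleGraph V)
    [DecidableRel G.Adj] (n δ : ℕ) (hn : Fintype.card V = n) (hδ : G.minDegree = δ) (hconn : G.Connected) (h2 : 2 ≤ δ) :
    (⨆ v : V, (∑ w : V, (G.dist v w : ℝ)) / ((n : ℝ) - 1)) - (⨅ v : V, (∑ w : V, (G.dist v w : ℝ)) / ((n : ℝ) - 1)) ≤ 3 * (n : ℝ) / (4 * ((δ : ℝ) + 1)) + 3 :=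
  stmt3_general G n δ hn hδ hconn h2
end

section
/- Let G be a connected graph of order n ≥ 20 and minimum degree δ ≥ 2. Then diam(G) − π(G) ≤ 9n/(4(δ+1)) + 3δ/4. -/
open Finset SimpleGraph

set_option maxHeartbeats 1000000 in

lemma arith (n t m D : ℕ) (hn : 20 ≤ n) (ht : 3 ≤ t) (htn : t ≤ n) (hm : 1 ≤ m)
    (hmt : m * t ≤ n) (hD1 : D ≤ 3*m+1) (hD2 : D + 1 ≤ n) :
    (D:ℝ) - ((t:ℝ)*(3*(m:ℝ)^2-3)/4 - ((t:ℝ)-1)*(m:ℝ)) / ((n:ℝ)-1)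
      ≤ 9*(n:ℝ)/(4*(t:ℝ)) + 3*((t:ℝ)-1)/4 := by
  have hn' : (20:ℝ) ≤ n := by exact_mod_cast hn
  have htn' : (t:ℝ) ≤ n := by exact_mod_cast htn
  have hm' : (1:ℝ) ≤ m := by exact_mod_cast hm
  have hmt' : (m:ℝ) * t ≤ n := by exact_mod_cast hmt
  have hD1' : (D:ℝ) ≤ 3*m+1 := by exact_mod_cast hD1
  have hD2' : (D:ℝ) + 1 ≤ n := by exact_mod_cast hD2
  have hN : (0:ℝ) < (n:ℝ) - 1 := by linarith
  have hDn : (0:ℝ) ≤ D := Nat.cast_nonneg D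
  -- key polynomial inequality
  have key : 0 ≤ 9*(n:ℝ)*(n-1) + 3*t*(t-1)*(n-1) - 4*t*D*(n-1)
      + 3*(t:ℝ)^2*(m:ℝ)^2 - 3*(t:ℝ)^2 - 4*t*(t-1)*m := by
    rcases eq_or_lt_of_le ht with h3 | h4
    · -- t = 3
      subst h3
      push_cast
      have hid : 9*(n:ℝ)*(n-1) + 3*3*(3-1)*(n-1) - 4*3*D*(n-1)
          + 3*(3:ℝ)^2*(m:ℝ)^2 - 3*(3:ℝ)^2 - 4*3*(3-1)*m
          = 12*((n:ℝ)-1)*(3*m+1-D) + 3*((n:ℝ)-3*m)^2 + (6*n-4)*((n:ℝ)-3*m) + n - 33 := by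
        ring
      rw [hid]
      have hP : (0:ℝ) ≤ 12*((n:ℝ)-1)*(3*m+1-D) := by
        apply mul_nonneg
        · linarith
        · linarith
      rcases le_or_gt 1 ((n:ℝ) - 3*m) with hu1 | hu0
      · nlinarith [sq_nonneg ((n:ℝ) - 3*m)]
      · -- n - 3m < 1, so since casts of naturals, n = 3m (as n ≥ 3m), and 3m+1-D ≥ 2
        have h3mn : 3*m ≤ n := by omega
        have : n = 3*m := by
          by_contra hne
          have : 3*m + 1 ≤ n := by omega
          have : (3:ℝ)*m + 1 ≤ n := by exact_mod_cast this
          linarith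
        have hnm : (n:ℝ) = 3*m := by exact_mod_cast this
        have hD3 : (D:ℝ) + 1 ≤ 3*m := by rw [← hnm]; exact hD2'
        have hD4 : (D:ℝ) ≤ 3*m - 1 := by linarith
        nlinarith [sq_nonneg ((n:ℝ) - 3*m)]
    · -- t ≥ 4
      have ht4 : (4:ℝ) ≤ t := by exact_mod_cast h4
      have e1 : (0:ℝ) ≤ 4*t*((n:ℝ)-1)*(3*m+1-D) := by
        apply mul_nonneg
        apply mul_nonneg
        · positivity
        · linarith
        · linarith
      have e2 : (0:ℝ) ≤ ((n:ℝ) - m*t)*(6*n+4*t-16) := by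
        apply mul_nonneg <;> linarith
      have e3 : (0:ℝ) ≤ ((n:ℝ)-20)*(3*(t:ℝ)^2-11*t+7) := by
        apply mul_nonneg
        · linarith
        · nlinarith
      have e4 : (0:ℝ) ≤ 54*(t:ℝ)^2 - 213*t + 140 := by nlinarith
      nlinarith [sq_nonneg ((t:ℝ)*m - n), e1, e2, e3, e4]
  -- derive the goal from key
  have ht' : (3:ℝ) ≤ (t:ℝ) := by exact_mod_cast ht
  have htpos : (0:ℝ) < (t:ℝ) := by linarith
  rw [sub_le_iff_le_add, ← sub_le_iff_le_add', le_div_iff₀ hN]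
  have expand : ((D:ℝ) - (9*(n:ℝ)/(4*(t:ℝ)) + 3*((t:ℝ)-1)/4)) * ((n:ℝ)-1)
      = ((D:ℝ)*(4*t*((n:ℝ)-1)) - 9*n*((n:ℝ)-1) - 3*((t:ℝ)-1)*t*((n:ℝ)-1))/(4*t) := by
    field_simp
    ring
  rw [expand, div_le_iff₀ (by positivity)]
  linarith [key]


lemma absSum : ∀ (m : ℕ) (a : ℤ),
    3*(m:ℤ)^2 - 3 ≤ 4 * ∑ i ∈ Finset.range m, |a - (3*(i:ℤ)+1)|
  | 0, a => by simp
  | 1, a => by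
      simp only [Finset.sum_range_one]
      have := abs_nonneg (a - (3*((0:ℕ):ℤ)+1))
      push_cast at this ⊢
      linarith
  | (m+2), a => by
      have IH := absSum m (a - 3)
      rw [Finset.sum_range_succ, Finset.sum_range_succ']
      have hre : ∑ i ∈ Finset.range m, |a - (3*((i+1:ℕ):ℤ)+1)|
          = ∑ i ∈ Finset.range m, |(a-3) - (3*(i:ℤ)+1)| := by
        apply Finset.sum_congr rfl
        intro i _
        congr 1
        push_cast
        ring
      rw [hre]
      have h1 : |(a - (3*((0:ℕ):ℤ)+1)) - (a - (3*((m+1:ℕ):ℤ)+1))|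
          ≤ |a - (3*((0:ℕ):ℤ)+1)| + |a - (3*((m+1:ℕ):ℤ)+1)| := abs_sub _ _
      have h2 : ((3:ℤ)*(m:ℤ)+3) ≤ |(a - (3*((0:ℕ):ℤ)+1)) - (a - (3*((m+1:ℕ):ℤ)+1))| := by
        have : (a - (3*((0:ℕ):ℤ)+1)) - (a - (3*((m+1:ℕ):ℤ)+1)) = 3*(m:ℤ)+3 := by
          push_cast; ring
        rw [this]
        exact le_abs_self _
      push_cast at h1 h2 ⊢
      nlinarith [IH, h1, h2]


set_option maxHeartbeats 2000000 in
theorem stmt4 {V : Type*} [Fintype V] [DecidableEq V] (G : SimpleGraph V)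
    [DecidableRel G.Adj] (n δ : ℕ) (hn : Fintype.card V = n) (hδ : G.minDegree = δ) (hconn : G.Connected) (hn20 : 20 ≤ n) (h2 : 2 ≤ δ) :
    (((Finset.univ.sup fun v : V => Finset.univ.sup fun w : V => G.dist v w) : ℕ) : ℝ) - (⨅ v : V, (∑ w : V, (G.dist v w : ℝ)) / ((n : ℝ) - 1)) ≤ 9 * (n : ℝ) / (4 * ((δ : ℝ) + 1)) + 3 * (δ : ℝ) / 4 := by
  have hVne : Nonempty V := by
    rw [← Fintype.card_pos_iff, hn]; omega
  set D : ℕ := Finset.univ.sup fun v : V => Finset.univ.sup fun w : V => G.dist v w with hDdef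
  have hub : ∀ x y : V, G.dist x y ≤ D := fun x y =>
    le_trans (Finset.le_sup (Finset.mem_univ y)) (Finset.le_sup (f := fun v : V => Finset.univ.sup fun w : V => G.dist v w) (Finset.mem_univ x))
  -- the infimum is at least any uniform lower bound
  have hn1 : (1:ℝ) ≤ (n:ℝ) - 1 + 1 := by
    have : (20:ℝ) ≤ n := by exact_mod_cast hn20
    linarith
  have hNpos : (0:ℝ) < (n:ℝ) - 1 := by
    have : (20:ℝ) ≤ n := by exact_mod_cast hn20
    linarith
  have hinf0 : (0:ℝ) ≤ ⨅ v : V, (∑ w : V, (G.dist v w : ℝ)) / ((n : ℝ) - 1) := by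
    apply le_ciInf
    intro v
    apply div_nonneg _ (le_of_lt hNpos)
    exact Finset.sum_nonneg fun w _ => Nat.cast_nonneg _
  have hδR : (2:ℝ) ≤ (δ:ℝ) := by exact_mod_cast h2
  have htR : (0:ℝ) < (δ:ℝ) + 1 := by linarith
  have hfrac : (0:ℝ) ≤ 9 * (n : ℝ) / (4 * ((δ : ℝ) + 1)) := by positivity
  by_cases hD1 : D ≤ 1
  · have : (D:ℝ) ≤ 1 := by exact_mod_cast hD1
    linarith
  push_neg at hD1
  -- D ≥ 2
  -- get diametral pair
  obtain ⟨u, -, hu⟩ := Finset.exists_mem_eq_sup Finset.univ Finset.univ_nonempty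
    (fun v : V => Finset.univ.sup fun w : V => G.dist v w)
  obtain ⟨w, -, hw⟩ := Finset.exists_mem_eq_sup Finset.univ Finset.univ_nonempty
    (fun w : V => G.dist u w)
  have hDuw : G.dist u w = D := by rw [hDdef, hu, hw]
  obtain ⟨p, hp⟩ := hconn.exists_walk_length_eq_dist u w
  rw [hDuw] at hp
  set x : ℕ → V := fun j => p.getVert j with hx
  -- prefix distance bounds
  have hup : ∀ j, G.dist u (x j) ≤ j := by
    intro j
    induction j with
    | zero => simp [hx]
    | succ k ih =>
      rcases le_or_gt (k+1) D with hk | hk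
      · have hadj : G.Adj (x k) (x (k+1)) := p.adj_getVert_succ (by omega)
        calc G.dist u (x (k+1)) ≤ G.dist u (x k) + G.dist (x k) (x (k+1)) := hconn.dist_triangle
          _ ≤ k + 1 := by
              have : G.dist (x k) (x (k+1)) = 1 := dist_eq_one_iff_adj.mpr hadj
              omega
      · have : x (k+1) = x k := by
          rw [hx]
          simp only []
          rw [p.getVert_of_length_le (by omega), p.getVert_of_length_le (by omega)]
        rw [this]
        exact le_trans ih (by omega)
  have hxD : x D = w := by
    rw [hx]; simp only []
    rw [show D = p.length from hp.symm]
    exact p.getVert_length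
  have hdown : ∀ i, i ≤ D → G.dist (x (D - i)) w ≤ i := by
    intro i
    induction i with
    | zero =>
      intro _
      rw [Nat.sub_zero, hxD]
      simp
    | succ k ih =>
      intro hk
      have hadj : G.Adj (x (D - (k+1))) (x (D - k)) := by
        have h1 : D - (k+1) < p.length := by omega
        have := p.adj_getVert_succ h1
        rw [show D - (k+1) + 1 = D - k by omega] at this
        exact this
      calc G.dist (x (D - (k+1))) w ≤ G.dist (x (D-(k+1))) (x (D-k)) + G.dist (x (D-k)) w :=
            hconn.dist_triangle
        _ ≤ k + 1 := by
            have h1 : G.dist (x (D-(k+1))) (x (D-k)) = 1 := dist_eq_one_iff_adj.mpr hadj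
            have h2 := ih (by omega)
            omega
  have hxw : ∀ j, j ≤ D → G.dist (x j) w ≤ D - j := by
    intro j hj
    have := hdown (D - j) (by omega)
    rwa [show D - (D - j) = j by omega] at this
  have hlowU : ∀ j, j ≤ D → j ≤ G.dist u (x j) := by
    intro j hj
    have h1 : D ≤ G.dist u (x j) + G.dist (x j) w := by
      rw [← hDuw]; exact hconn.dist_triangle
    have h2 := hxw j hj
    omega
  -- number of groups
  set m : ℕ := (D + 1) / 3 with hm
  have hm1 : 1 ≤ m := by omega
  have hDm : D ≤ 3 * m + 1 := by omega
  have hcle : ∀ i, i < m → 3 * i + 1 ≤ D - 1 := by intro i hi; omega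
  -- group finsets
  set S : ℕ → Finset V := fun i => insert (x (3*i+1)) (G.neighborFinset (x (3*i+1))) with hS
  have hScard : ∀ i, δ + 1 ≤ (S i).card := by
    intro i
    rw [hS]
    simp only []
    rw [Finset.card_insert_of_notMem (G.notMem_neighborFinset_self _)]
    have h1 := G.minDegree_le_degree (x (3*i+1))
    rw [hδ] at h1
    rw [card_neighborFinset_eq_degree]
    omega
  have hSdist : ∀ i y, y ∈ S i → G.dist (x (3*i+1)) y ≤ 1 := by
    intro i y hy
    rw [hS] at hy
    simp only [Finset.mem_insert, mem_neighborFinset] at hy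
    rcases hy with rfl | hadj
    · simp [SimpleGraph.dist_self]
    · exact le_of_eq (dist_eq_one_iff_adj.mpr hadj)
  -- separation of centers
  have hsep : ∀ i j : ℕ, i < m → j < m → i < j → 3*(j-i) ≤ G.dist (x (3*i+1)) (x (3*j+1)) := by
    intro i j hi hj hij
    have h1 : 3*j+1 ≤ G.dist u (x (3*j+1)) := hlowU _ (by omega)
    have h2 : G.dist u (x (3*j+1)) ≤ G.dist u (x (3*i+1)) + G.dist (x (3*i+1)) (x (3*j+1)) :=
      hconn.dist_triangle
    have h3 : G.dist u (x (3*i+1)) ≤ 3*i+1 := hup _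
    omega
  have hdisj : ∀ i ∈ Finset.range m, ∀ j ∈ Finset.range m, i ≠ j → Disjoint (S i) (S j) := by
    intro i hi j hj hij
    rw [Finset.mem_range] at hi hj
    rw [Finset.disjoint_left]
    intro y hyi hyj
    have d1 := hSdist i y hyi
    have d2 := hSdist j y hyj
    have htri : G.dist (x (3*i+1)) (x (3*j+1)) ≤ G.dist (x (3*i+1)) y + G.dist y (x (3*j+1)) :=
      hconn.dist_triangle
    rw [SimpleGraph.dist_comm (u := y)] at htri
    rcases Nat.lt_or_ge i j with h | h
    · have := hsep i j hi hj h
      omega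
    · have hji : j < i := by omega
      have := hsep j i hj hi hji
      rw [SimpleGraph.dist_comm] at this
      omega
  -- cardinality bound
  have hcard : m * (δ + 1) ≤ n := by
    have h1 : ((Finset.range m).biUnion S).card = ∑ i ∈ Finset.range m, (S i).card :=
      Finset.card_biUnion hdisj
    have h2 : ((Finset.range m).biUnion S).card ≤ n := by
      rw [← hn]
      exact le_trans (Finset.card_le_card (Finset.subset_univ _)) (le_of_eq (Finset.card_univ))
    have h3 : m * (δ + 1) ≤ ∑ i ∈ Finset.range m, (S i).card := by
      calc m * (δ + 1) = ∑ _i ∈ Finset.range m, (δ + 1) := by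
            rw [Finset.sum_const, Finset.card_range, smul_eq_mul]
        _ ≤ ∑ i ∈ Finset.range m, (S i).card := Finset.sum_le_sum fun i _ => hScard i
    omega
  -- D ≤ n - 1
  have hDn : D + 1 ≤ n := by
    have hpath : p.IsPath := p.isPath_of_length_eq_dist (by rw [hp, hDuw])
    have := hpath.length_lt
    rw [hp, hn] at this
    omega
  -- t ≤ n
  have htn : δ + 1 ≤ n := by
    have h1 := G.minDegree_le_degree (Classical.arbitrary V)
    have h2 := G.degree_lt_card_verts (Classical.arbitrary V)
    rw [hδ] at h1
    rw [hn] at h2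
    omega
  -- per-vertex sum lower bound
  have hsum : ∀ v : V, (((δ:ℤ)+1)*(3*(m:ℤ)^2-3) - 4*(δ:ℤ)*(m:ℤ)) ≤ 4 * ∑ w : V, (G.dist v w : ℤ) := by
    intro v
    set a : ℕ := G.dist u v with ha
    have hvx : ∀ j, j ≤ D → |(a:ℤ) - (j:ℤ)| ≤ (G.dist v (x j) : ℤ) := by
      intro j hj
      have h1 : j ≤ a + G.dist v (x j) := by
        have := hlowU j hj
        have htr : G.dist u (x j) ≤ G.dist u v + G.dist v (x j) := hconn.dist_triangle
        omega
      have h2 : a ≤ j + G.dist v (x j) := by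
        have htr : G.dist u v ≤ G.dist u (x j) + G.dist (x j) v := hconn.dist_triangle
        have := hup j
        rw [SimpleGraph.dist_comm (u := x j)] at htr
        omega
      rw [abs_le]
      constructor
      · push_cast
        omega
      · push_cast
        omega
    have hgroup : ∀ i, i < m →
        ((δ:ℤ)+1) * |(a:ℤ) - (3*(i:ℤ)+1)| - (δ:ℤ) ≤ ∑ y ∈ S i, (G.dist v y : ℤ) := by
      intro i hi
      have hcD : 3*i+1 ≤ D := by
        have := hcle i hi
        omega
      have hc := hvx (3*i+1) hcD
      push_cast at hc
      set M : ℤ := max (|(a:ℤ) - (3*(i:ℤ)+1)| - 1) 0 with hM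
      have hM0 : 0 ≤ M := le_max_right _ _
      have hM1 : |(a:ℤ) - (3*(i:ℤ)+1)| - 1 ≤ M := le_max_left _ _
      have hnb : ∀ y ∈ G.neighborFinset (x (3*i+1)), M ≤ (G.dist v y : ℤ) := by
        intro y hy
        rw [mem_neighborFinset] at hy
        apply max_le
        · have htr : G.dist v (x (3*i+1)) ≤ G.dist v y + G.dist y (x (3*i+1)) :=
            hconn.dist_triangle
          have hd1 : G.dist y (x (3*i+1)) = 1 := dist_eq_one_iff_adj.mpr hy.symm
          have : G.dist v (x (3*i+1)) ≤ G.dist v y + 1 := by omega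
          have hcast : (G.dist v (x (3*i+1)) : ℤ) ≤ (G.dist v y : ℤ) + 1 := by exact_mod_cast this
          linarith [hc]
        · exact Int.ofNat_nonneg _
      have hsumnb : (G.degree (x (3*i+1)) : ℤ) * M ≤ ∑ y ∈ G.neighborFinset (x (3*i+1)), (G.dist v y : ℤ) := by
        have := Finset.card_nsmul_le_sum (G.neighborFinset (x (3*i+1))) (fun y => (G.dist v y : ℤ)) M hnb
        rw [card_neighborFinset_eq_degree] at this
        simpa [nsmul_eq_mul] using this
      have hdeg : (δ:ℤ) ≤ (G.degree (x (3*i+1)) : ℤ) := by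
        have h1 := G.minDegree_le_degree (x (3*i+1))
        rw [hδ] at h1
        exact_mod_cast h1
      rw [hS]
      simp only []
      rw [Finset.sum_insert (G.notMem_neighborFinset_self _)]
      have hδM : (δ:ℤ) * M ≤ (G.degree (x (3*i+1)) : ℤ) * M :=
        mul_le_mul_of_nonneg_right hdeg hM0
      nlinarith [hc, hM0, hM1, hsumnb, hδM]
    -- assemble
    have hsub : ∑ y ∈ (Finset.range m).biUnion S, (G.dist v y : ℤ) ≤ ∑ w : V, (G.dist v w : ℤ) :=
      Finset.sum_le_sum_of_subset_of_nonneg (Finset.subset_univ _)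
        (fun y _ _ => Int.ofNat_nonneg _)
    rw [Finset.sum_biUnion hdisj] at hsub
    have hT : ∑ i ∈ Finset.range m, (((δ:ℤ)+1) * |(a:ℤ) - (3*(i:ℤ)+1)| - (δ:ℤ))
        ≤ ∑ i ∈ Finset.range m, ∑ y ∈ S i, (G.dist v y : ℤ) :=
      Finset.sum_le_sum (fun i hi => hgroup i (Finset.mem_range.mp hi))
    have habs := absSum m (a:ℤ)
    have hsplit : ∑ i ∈ Finset.range m, (((δ:ℤ)+1) * |(a:ℤ) - (3*(i:ℤ)+1)| - (δ:ℤ))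
        = ((δ:ℤ)+1) * ∑ i ∈ Finset.range m, |(a:ℤ) - (3*(i:ℤ)+1)| - (δ:ℤ) * m := by
      rw [Finset.sum_sub_distrib, ← Finset.mul_sum, Finset.sum_const, Finset.card_range]
      ring
    rw [hsplit] at hT
    have hδ1 : (0:ℤ) ≤ (δ:ℤ)+1 := by positivity
    have hmul : ((δ:ℤ)+1)*(3*(m:ℤ)^2-3) ≤ ((δ:ℤ)+1)*(4 * ∑ i ∈ Finset.range m, |(a:ℤ) - (3*(i:ℤ)+1)|) :=
      mul_le_mul_of_nonneg_left habs hδ1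
    linarith [hT, hsub, hmul]
  -- infimum lower bound
  have hinfB : (((δ:ℝ)+1)*(3*(m:ℝ)^2-3)/4 - (δ:ℝ)*(m:ℝ))/((n:ℝ)-1)
      ≤ ⨅ v : V, (∑ w : V, (G.dist v w : ℝ)) / ((n : ℝ) - 1) := by
    apply le_ciInf
    intro v
    rw [div_le_div_iff_of_pos_right hNpos]
    have h4 := hsum v
    have hcast : ((((δ:ℤ)+1)*(3*(m:ℤ)^2-3) - 4*(δ:ℤ)*(m:ℤ)) : ℝ) ≤ ((4 * ∑ w : V, (G.dist v w : ℤ) : ℤ) : ℝ) := by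
      exact_mod_cast h4
    push_cast at hcast
    linarith
  -- conclude via arith
  have harith := arith n (δ+1) m D hn20 (by omega) htn hm1 hcard hDm hDn
  push_cast at harith
  have hsimp : ((δ:ℝ) + 1 - 1) = (δ:ℝ) := by ring
  rw [hsimp] at harith
  linarith [hinfB, harith]
end

section
/- Let G be a connected graph of order n and minimum degree δ with δ < n/4 − 1. Then rad(G) − π(G) ≤ 3n/(4(δ+1)) + (8δ+5)/(4(δ+1)). -/
open Finset

namespace Stmt5Aux

variable {V : Type*} [Fintype V] [DecidableEq V]

lemma gauss1 (e : ℕ) : 2 * ∑ i ∈ Finset.Icc 3 e, (i - 2) = (e - 1) * (e - 2) := by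
  induction e with
  | zero => simp
  | succ b ih =>
    rcases Nat.lt_or_ge b 2 with hb | hb
    · interval_cases b <;> simp [show Finset.Icc 3 1 = ∅ from rfl, show Finset.Icc 3 2 = ∅ from rfl]
    · rw [Finset.sum_Icc_succ_top (by omega : 3 ≤ b + 1)]
      obtain ⟨c, rfl⟩ : ∃ c, b = c + 2 := ⟨b - 2, by omega⟩
      have h1 : c + 2 + 1 - 2 = c + 1 := by omega
      have h2 : c + 2 - 1 = c + 1 := by omega
      have h3 : c + 2 - 2 = c := by omega
      have h4 : c + 2 + 1 - 1 = c + 2 := by omega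
      rw [h1, h4, h1] at *
      rw [h2, h3] at ih
      nlinarith [ih]

lemma gauss2 {j : ℕ} (hj : 3 ≤ j) : ∀ l, j - 1 ≤ l →
    (j - 2) * (j - 3) + 2 * ∑ i ∈ Finset.Icc j l, (i - 2) = (l - 1) * (l - 2) := by
  intro l
  refine Nat.le_induction ?_ ?_ l
  · have : Finset.Icc j (j - 1) = ∅ := by
      apply Finset.Icc_eq_empty
      omega
    rw [this]
    simp
    obtain ⟨c, rfl⟩ : ∃ c, j = c + 3 := ⟨j - 3, by omega⟩
    have h1 : c + 3 - 2 = c + 1 := by omega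
    have h2 : c + 3 - 3 = c := by omega
    have h3 : c + 3 - 1 - 1 = c + 1 := by omega
    have h4 : c + 3 - 1 - 2 = c := by omega
    rw [h1, h2, h3, h4]
  · intro l hl ih
    rw [Finset.sum_Icc_succ_top (by omega : j ≤ l + 1)]
    obtain ⟨c, rfl⟩ : ∃ c, l = c + 2 := ⟨l - 2, by omega⟩
    have h2 : c + 2 - 1 = c + 1 := by omega
    have h3 : c + 2 - 2 = c := by omega
    rw [h2, h3] at ih
    have h1 : c + 2 + 1 - 2 = c + 1 := by omega
    have h4 : c + 2 + 1 - 1 = c + 2 := by omega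
    rw [h1, h4]
    nlinarith [ih]


lemma walk_dist_le {G : SimpleGraph V} (hconn : G.Connected) {u v : V} (p : G.Walk u v) :
    ∀ s t : ℕ, s ≤ t → t ≤ p.length → G.dist (p.getVert s) (p.getVert t) ≤ t - s := by
  induction p with
  | nil =>
    intro s t hst ht
    simp only [SimpleGraph.Walk.length_nil, Nat.le_zero] at ht
    subst ht
    have hs : s = 0 := by omega
    subst hs
    simp [SimpleGraph.dist_self]
  | @cons a b c hadj q ih =>
    intro s t hst ht
    cases s with
    | zero =>
      cases t with
      | zero => simp [SimpleGraph.dist_self]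
      | succ t' =>
        have hlen : t' ≤ q.length := by
          simp only [SimpleGraph.Walk.length_cons] at ht; omega
        have h1 : G.dist a b ≤ 1 := by
          have := SimpleGraph.dist_le (SimpleGraph.Walk.cons hadj (SimpleGraph.Walk.nil))
          simpa using this
        have h2 : G.dist b (q.getVert t') ≤ t' := by
          have := ih 0 t' (Nat.zero_le _) hlen
          simpa [SimpleGraph.Walk.getVert_zero] using this
        have h3 : (SimpleGraph.Walk.cons hadj q).getVert 0 = a := by
          simp [SimpleGraph.Walk.getVert_zero]
        have h4 : (SimpleGraph.Walk.cons hadj q).getVert (t' + 1) = q.getVert t' := rfl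
        rw [h3, h4]
        calc G.dist a (q.getVert t') ≤ G.dist a b + G.dist b (q.getVert t') := hconn.dist_triangle
          _ ≤ 1 + t' := add_le_add h1 h2
          _ = t' + 1 - 0 := by omega
    | succ s' =>
      cases t with
      | zero => omega
      | succ t' =>
        have hlen : t' ≤ q.length := by
          simp only [SimpleGraph.Walk.length_cons] at ht; omega
        have := ih s' t' (by omega) hlen
        simpa [SimpleGraph.Walk.getVert_cons_succ] using this

/-- On a geodesic walk, `getVert t` is at distance exactly `t` from the start and
the remaining distance to the end is at most `length - t`. -/
lemma geodesic_getVert {G : SimpleGraph V} (hconn : G.Connected) {u v : V} (p : G.Walk u v)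
    (hp : p.length = G.dist u v) {t : ℕ} (ht : t ≤ p.length) :
    G.dist u (p.getVert t) = t ∧ G.dist (p.getVert t) v ≤ p.length - t := by
  have h1 : G.dist u (p.getVert t) ≤ t := by
    have := walk_dist_le hconn p 0 t (Nat.zero_le _) ht
    simpa [SimpleGraph.Walk.getVert_zero] using this
  have h2 : G.dist (p.getVert t) v ≤ p.length - t := by
    have := walk_dist_le hconn p t p.length ht le_rfl
    simpa [SimpleGraph.Walk.getVert_length] using this
  have h3 : G.dist u v ≤ G.dist u (p.getVert t) + G.dist (p.getVert t) v := hconn.dist_triangle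
  constructor
  · omega
  · exact h2


lemma ball_card (G : SimpleGraph V) [DecidableRel G.Adj] (z : V) :
    G.minDegree + 1 ≤ (insert z (G.neighborFinset z)).card := by
  rw [Finset.card_insert_of_notMem (G.notMem_neighborFinset_self z),
      SimpleGraph.card_neighborFinset_eq_degree]
  have := G.minDegree_le_degree z
  omega

lemma ball_dist {G : SimpleGraph V} [DecidableRel G.Adj] {z y : V}
    (hy : y ∈ insert z (G.neighborFinset z)) : G.dist z y ≤ 1 := by
  rcases Finset.mem_insert.1 hy with h | h
  · subst h; simp [SimpleGraph.dist_self]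
  · have hadj : G.Adj z y := (SimpleGraph.mem_neighborFinset G z y).1 h
    have := SimpleGraph.dist_le (SimpleGraph.Walk.cons hadj (SimpleGraph.Walk.nil))
    simpa using this

lemma endgame {A M S R P : ℝ} (hA : 0 < A) (hM : 0 < M) (hS : M + A * P / 6 ≤ S)
    (hP : 2 * (R - 3) ^ 2 ≤ P) : R ≤ S / M + 3 * M / (4 * A) + 2 := by
  have h1 : R - 3 ≤ A * P / (6 * M) + 3 * M / (4 * A) := by
    rw [← sub_nonneg]
    have expand : A * P / (6 * M) + 3 * M / (4 * A) - (R - 3)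
        = (2 * A ^ 2 * P + 9 * M ^ 2 - 12 * A * M * (R - 3)) / (12 * A * M) := by
      field_simp
      ring
    rw [expand]
    apply div_nonneg _ (by positivity)
    nlinarith [sq_nonneg (2 * A * (R - 3) - 3 * M),
      mul_le_mul_of_nonneg_left hP (sq_nonneg A)]
  have h2 : 1 + A * P / (6 * M) ≤ S / M := by
    rw [le_div_iff₀ hM]
    have hexp : (1 + A * P / (6 * M)) * M = M + A * P / 6 := by
      field_simp
    rw [hexp]
    exact hS
  linarith


set_option maxHeartbeats 2000000 in
lemma key (G : SimpleGraph V) [DecidableRel G.Adj] (hconn : G.Connected) (u : V)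
    (n : ℕ) (hn : Fintype.card V = n) (hn5 : 5 ≤ n) :
    ((⨅ v : V, Finset.univ.sup fun w : V => G.dist v w : ℕ) : ℝ)
      ≤ (∑ w : V, (G.dist u w : ℝ)) / ((n : ℝ) - 1)
        + (3 * ((n : ℝ) - 1) / (4 * ((G.minDegree : ℝ) + 1)) + 2) := by
  classical
  haveI : Nonempty V := hconn.nonempty
  set a : ℕ := G.minDegree + 1 with ha
  set r : ℕ := ⨅ v : V, Finset.univ.sup fun w : V => G.dist v w with hrdef
  set e : ℕ := Finset.univ.sup fun w : V => G.dist u w with hedef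
  have hre : r ≤ e := ciInf_le (OrderBot.bddBelow _) u
  have hdist_le_e : ∀ w, G.dist u w ≤ e := fun w => Finset.le_sup (Finset.mem_univ w)
  set S : ℕ := ∑ w : V, G.dist u w with hSdef
  have hsum_cast : (∑ w : V, (G.dist u w : ℝ)) = (S : ℝ) := by
    rw [hSdef]; push_cast; ring
  -- basic positivity
  have hM : (0 : ℝ) < (n : ℝ) - 1 := by
    have : (5 : ℝ) ≤ (n : ℝ) := by exact_mod_cast hn5
    linarith
  have hA : (0 : ℝ) < (a : ℝ) := by positivity
  have hAcast : ((G.minDegree : ℝ) + 1) = (a : ℝ) := by rw [ha]; push_cast; ring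
  -- sum split
  set S' : ℕ := ∑ w : V, (G.dist u w - 1) with hS'def
  have hsplit : S = (n - 1) + S' := by
    have hterm : ∀ w : V, G.dist u w = (if w = u then 0 else 1) + (G.dist u w - 1) := by
      intro w
      by_cases hw : w = u
      · subst hw; simp [SimpleGraph.dist_self]
      · have : 0 < G.dist u w := hconn.pos_dist_of_ne (Ne.symm hw)
        simp only [hw, if_false]
        omega
    have : S = (∑ w : V, if w = u then 0 else 1) + S' := by
      rw [hSdef, hS'def, ← Finset.sum_add_distrib]
      exact Finset.sum_congr rfl (fun w _ => hterm w)
    rw [this]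
    congr 1
    rw [Finset.sum_ite, Finset.sum_const, Finset.sum_const]
    simp only [smul_eq_mul, mul_zero, mul_one, zero_add]
    rw [Finset.filter_ne' Finset.univ u, Finset.card_erase_of_mem (Finset.mem_univ u)]
    rw [Finset.card_univ, hn]
  clear_value a r e S S'
  rw [hsum_cast, hAcast]
  -- case r ≤ 3
  rcases Nat.lt_or_ge r 4 with hr3 | hr4
  case inl =>
    -- r ≤ 3 : trivial since S/M ≥ 1 and 3M/(4a) ≥ 0
    have h1 : (1 : ℝ) ≤ (S : ℝ) / ((n : ℝ) - 1) := by
      rw [le_div_iff₀ hM, one_mul]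
      have : (n : ℕ) - 1 ≤ S := by
        calc n - 1 = (Finset.univ.erase u).card := by
              rw [Finset.card_erase_of_mem (Finset.mem_univ u), Finset.card_univ, hn]
          _ = ∑ _w ∈ Finset.univ.erase u, 1 := by rw [Finset.sum_const, smul_eq_mul, mul_one]
          _ ≤ ∑ w ∈ Finset.univ.erase u, G.dist u w := by
              apply Finset.sum_le_sum
              intro w hw
              exact hconn.pos_dist_of_ne (Ne.symm (Finset.mem_erase.1 hw).1)
          _ ≤ S := by
              rw [hSdef]
              exact Finset.sum_le_sum_of_subset (Finset.erase_subset _ _)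
      have hcast : ((n : ℝ) - 1) ≤ ((n - 1 : ℕ) : ℝ) := by
        rw [Nat.cast_sub (by omega)]; push_cast; ring_nf; rfl
      calc ((n : ℝ) - 1) ≤ ((n - 1 : ℕ) : ℝ) := hcast
        _ ≤ (S : ℝ) := by exact_mod_cast this
    have h2 : (0 : ℝ) ≤ 3 * ((n : ℝ) - 1) / (4 * (a : ℝ)) := by positivity
    have h3 : (r : ℝ) ≤ 3 := by
      have : r ≤ 3 := by omega
      exact_mod_cast this
    linarith
  case inr =>
    -- MAIN CASE: r ≥ 4.
    -- far vertex x and geodesic W : u → x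
    obtain ⟨x, -, hx⟩ := Finset.exists_mem_eq_sup Finset.univ Finset.univ_nonempty
      (fun w : V => G.dist u w)
    obtain ⟨W, hW⟩ := hconn.exists_walk_length_eq_dist u x
    have hWlen : W.length = e := by rw [hW, hedef, hx]
    set p : ℕ → V := fun t => W.getVert t with hp
    have hpdist : ∀ t, t ≤ e → G.dist u (p t) = t := by
      intro t ht
      exact (geodesic_getVert hconn W hW (by omega)).1
    have hpp : ∀ s t, s ≤ t → t ≤ e → G.dist (p s) (p t) ≤ t - s := by
      intro s t hst ht
      exact walk_dist_le hconn W s t hst (by omega)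
    -- index j and the server v
    set j : ℕ := e + 3 - r with hjdef
    have hj3 : 3 ≤ j := by omega
    have hje : j ≤ e := by omega
    have hrpj : r ≤ Finset.univ.sup fun w : V => G.dist (p j) w := by
      rw [hrdef]
      exact ciInf_le (OrderBot.bddBelow _) (p j)
    obtain ⟨v, -, hv⟩ := Finset.exists_mem_eq_sup Finset.univ Finset.univ_nonempty
      (fun w : V => G.dist (p j) w)
    have hpjv : r ≤ G.dist (p j) v := by rw [← hv]; exact hrpj
    set l : ℕ := G.dist u v with hldef
    have hle : l ≤ e := hdist_le_e v
    have hjl_low : r ≤ j + l := by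
      have t1 : G.dist (p j) v ≤ G.dist (p j) u + G.dist u v := hconn.dist_triangle
      have t2 : G.dist (p j) u = j := by rw [SimpleGraph.dist_comm]; exact hpdist j hje
      omega
    -- second geodesic W2 : u → v
    obtain ⟨W2, hW2⟩ := hconn.exists_walk_length_eq_dist u v
    have hW2len : W2.length = l := by rw [hW2, hldef]
    set g : ℕ → V := fun t => W2.getVert t with hg
    have hgdist : ∀ t, t ≤ l → G.dist u (g t) = t := by
      intro t ht
      exact (geodesic_getVert hconn W2 hW2 (by omega)).1
    have hgv : ∀ t, t ≤ l → G.dist (g t) v ≤ l - t := by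
      intro t ht
      have h := (geodesic_getVert hconn W2 hW2 (by omega : t ≤ W2.length)).2
      rw [hW2len] at h
      exact h
    -- windows
    set F : ℕ → Finset V :=
      fun i => Finset.univ.filter (fun w => i - 1 ≤ G.dist u w ∧ G.dist u w ≤ i + 1) with hF
    have hFsub : ∀ (z : V) (i : ℕ), 3 ≤ i → G.dist u z = i →
        insert z (G.neighborFinset z) ⊆ F i := by
      intro z i hi hz y hy
      have hdzy : G.dist z y ≤ 1 := ball_dist hy
      have t1 : G.dist u y ≤ G.dist u z + G.dist z y := hconn.dist_triangle
      have t2 : G.dist u z ≤ G.dist u y + G.dist y z := hconn.dist_triangle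
      have t3 : G.dist y z = G.dist z y := SimpleGraph.dist_comm
      rw [hF]
      simp only [Finset.mem_filter, Finset.mem_univ, true_and]
      omega
    have hF1 : ∀ i ∈ Finset.Icc 3 e, a ≤ (F i).card := by
      intro i hi
      rw [Finset.mem_Icc] at hi
      calc a ≤ (insert (p i) (G.neighborFinset (p i))).card := by
            rw [ha]; exact ball_card G (p i)
        _ ≤ (F i).card := Finset.card_le_card (hFsub (p i) i hi.1 (hpdist i hi.2))
    -- disjointness of the two balls in windows j..l
    have hdisj : ∀ i, j ≤ i → i ≤ l →
        Disjoint (insert (p i) (G.neighborFinset (p i))) (insert (g i) (G.neighborFinset (g i))) := by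
      intro i hji hil
      rw [Finset.disjoint_left]
      intro z hz1 hz2
      exfalso
      have d1 : G.dist (p i) z ≤ 1 := ball_dist hz1
      have d2 : G.dist (g i) z ≤ 1 := ball_dist hz2
      have dpg : G.dist (p i) (g i) ≤ 2 := by
        have t1 : G.dist (p i) (g i) ≤ G.dist (p i) z + G.dist z (g i) := hconn.dist_triangle
        have t2 : G.dist z (g i) = G.dist (g i) z := SimpleGraph.dist_comm
        omega
      have t1 : G.dist (p j) v ≤ G.dist (p j) (p i) + G.dist (p i) v := hconn.dist_triangle
      have t2 : G.dist (p i) v ≤ G.dist (p i) (g i) + G.dist (g i) v := hconn.dist_triangle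
      have t3 : G.dist (p j) (p i) ≤ i - j := hpp j i hji (le_trans hil hle)
      have t4 : G.dist (g i) v ≤ l - i := hgv i hil
      omega
    have hF2 : ∀ i ∈ Finset.Icc j l, 2 * a ≤ (F i).card := by
      intro i hi
      rw [Finset.mem_Icc] at hi
      have hie : i ≤ e := le_trans hi.2 hle
      have hsub1 : insert (p i) (G.neighborFinset (p i)) ⊆ F i :=
        hFsub (p i) i (by omega) (hpdist i hie)
      have hsub2 : insert (g i) (G.neighborFinset (g i)) ⊆ F i :=
        hFsub (g i) i (by omega) (hgdist i hi.2)
      calc 2 * a ≤ (insert (p i) (G.neighborFinset (p i))).card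
            + (insert (g i) (G.neighborFinset (g i))).card := by
              have c1 := ball_card G (p i)
              have c2 := ball_card G (g i)
              omega
        _ = ((insert (p i) (G.neighborFinset (p i))) ∪ (insert (g i) (G.neighborFinset (g i)))).card :=
              (Finset.card_union_of_disjoint (hdisj i hi.1 hi.2)).symm
        _ ≤ (F i).card := Finset.card_le_card (Finset.union_subset hsub1 hsub2)
    clear_value j l F p g
    -- master window count : weighted windows are dominated by 3 * Σ (dist - 1)
    have hmaster : ∑ i ∈ Finset.Icc 3 e, (i - 2) * (F i).card ≤ 3 * S' := by
      calc ∑ i ∈ Finset.Icc 3 e, (i - 2) * (F i).card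
          = ∑ i ∈ Finset.Icc 3 e, ∑ _w ∈ F i, (i - 2) := by
            refine Finset.sum_congr rfl (fun i _ => ?_)
            rw [Finset.sum_const, smul_eq_mul, mul_comm]
        _ = ∑ i ∈ Finset.Icc 3 e, ∑ w : V,
              if i - 1 ≤ G.dist u w ∧ G.dist u w ≤ i + 1 then (i - 2) else 0 := by
            refine Finset.sum_congr rfl (fun i _ => ?_)
            rw [hF, Finset.sum_filter]
        _ = ∑ w : V, ∑ i ∈ Finset.Icc 3 e,
              if i - 1 ≤ G.dist u w ∧ G.dist u w ≤ i + 1 then (i - 2) else 0 :=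
            Finset.sum_comm
        _ ≤ ∑ w : V, 3 * (G.dist u w - 1) := by
            apply Finset.sum_le_sum
            intro w _
            rw [← Finset.sum_filter]
            have hsubI : (Finset.Icc 3 e).filter
                (fun i => i - 1 ≤ G.dist u w ∧ G.dist u w ≤ i + 1)
                ⊆ Finset.Icc (G.dist u w - 1) (G.dist u w + 1) := by
              intro i hi
              simp only [Finset.mem_filter, Finset.mem_Icc] at hi ⊢
              omega
            have hcard3 : ((Finset.Icc 3 e).filter
                (fun i => i - 1 ≤ G.dist u w ∧ G.dist u w ≤ i + 1)).card ≤ 3 := by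
              calc _ ≤ (Finset.Icc (G.dist u w - 1) (G.dist u w + 1)).card :=
                    Finset.card_le_card hsubI
                _ ≤ 3 := by rw [Nat.card_Icc]; omega
            calc ∑ i ∈ (Finset.Icc 3 e).filter
                  (fun i => i - 1 ≤ G.dist u w ∧ G.dist u w ≤ i + 1), (i - 2)
                ≤ ((Finset.Icc 3 e).filter
                  (fun i => i - 1 ≤ G.dist u w ∧ G.dist u w ≤ i + 1)).card • (G.dist u w - 1) := by
                  apply Finset.sum_le_card_nsmul
                  intro i hi
                  simp only [Finset.mem_filter, Finset.mem_Icc] at hi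
                  omega
              _ ≤ 3 * (G.dist u w - 1) := by
                  rw [smul_eq_mul]
                  exact Nat.mul_le_mul_right _ hcard3
        _ = 3 * S' := by rw [hS'def, Finset.mul_sum]
    -- always : the one-arm lower bound
    have hsum1 : a * ∑ i ∈ Finset.Icc 3 e, (i - 2)
        ≤ ∑ i ∈ Finset.Icc 3 e, (i - 2) * (F i).card := by
      rw [Finset.mul_sum]
      apply Finset.sum_le_sum
      intro i hi
      calc a * (i - 2) = (i - 2) * a := mul_comm _ _
        _ ≤ (i - 2) * (F i).card := Nat.mul_le_mul_left _ (hF1 i hi)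
    have hEr : (r : ℝ) ≤ (e : ℝ) := by exact_mod_cast hre
    have hr4' : (4 : ℝ) ≤ (r : ℝ) := by exact_mod_cast hr4
    rcases Nat.lt_or_ge (2 * e + 5) (3 * r) with hcase | hcase
    case inr =>
      -- case (i) : 3r ≤ 2e + 5, one arm suffices
      have hNat : 6 * (n - 1) + a * ((e - 1) * (e - 2)) ≤ 6 * S := by
        have e1 : a * ((e - 1) * (e - 2)) = 2 * (a * ∑ i ∈ Finset.Icc 3 e, (i - 2)) := by
          rw [← gauss1]; ring
        have h2 : a * ∑ i ∈ Finset.Icc 3 e, (i - 2) ≤ 3 * S' := le_trans hsum1 hmaster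
        omega
      have hcast : ((n : ℝ) - 1) + (a : ℝ) * (((e : ℝ) - 1) * ((e : ℝ) - 2)) / 6 ≤ (S : ℝ) := by
        have h6 : ((6 * (n - 1) + a * ((e - 1) * (e - 2)) : ℕ) : ℝ) ≤ ((6 * S : ℕ) : ℝ) := by
          exact_mod_cast hNat
        push_cast [Nat.cast_sub (show 1 ≤ n by omega), Nat.cast_sub (show 1 ≤ e by omega),
          Nat.cast_sub (show 2 ≤ e by omega)] at h6
        linarith
      have hP : 2 * ((r : ℝ) - 3) ^ 2 ≤ ((e : ℝ) - 1) * ((e : ℝ) - 2) := by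
        have hc : 3 * (r : ℝ) ≤ 2 * (e : ℝ) + 5 := by exact_mod_cast hcase
        have hb1 : (0 : ℝ) ≤ 2 * (e : ℝ) - 3 * (r : ℝ) + 5 := by linarith
        have hb2 : (0 : ℝ) ≤ 2 * (e : ℝ) + 3 * (r : ℝ) - 11 := by linarith
        nlinarith [mul_nonneg hb1 hb2]
      have := endgame hA hM hcast hP
      linarith
    case inl =>
      -- case (ii) : 2e + 6 ≤ 3r, two arms
      have hlj : j ≤ l := by omega
      have hsum12 : a * ∑ i ∈ Finset.Icc 3 e, (i - 2) + a * ∑ i ∈ Finset.Icc j l, (i - 2)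
          ≤ ∑ i ∈ Finset.Icc 3 e, (i - 2) * (F i).card := by
        have hIccsub : Finset.Icc j l ⊆ Finset.Icc 3 e := by
          intro i hi
          rw [Finset.mem_Icc] at hi ⊢
          omega
        have step : ∑ i ∈ Finset.Icc 3 e, ((i - 2) * a + if i ∈ Finset.Icc j l then (i - 2) * a else 0)
            ≤ ∑ i ∈ Finset.Icc 3 e, (i - 2) * (F i).card := by
          apply Finset.sum_le_sum
          intro i hi
          by_cases hmem : i ∈ Finset.Icc j l
          · rw [if_pos hmem]
            calc (i - 2) * a + (i - 2) * a = (i - 2) * (2 * a) := by ring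
              _ ≤ (i - 2) * (F i).card := Nat.mul_le_mul_left _ (hF2 i hmem)
          · rw [if_neg hmem, add_zero]
            exact Nat.mul_le_mul_left _ (hF1 i hi)
        have expand : ∑ i ∈ Finset.Icc 3 e, ((i - 2) * a + if i ∈ Finset.Icc j l then (i - 2) * a else 0)
            = ∑ i ∈ Finset.Icc 3 e, (i - 2) * a + ∑ i ∈ Finset.Icc j l, (i - 2) * a := by
          rw [Finset.sum_add_distrib]
          congr 1
          rw [Finset.sum_ite_mem, Finset.inter_eq_right.mpr hIccsub]
        calc a * ∑ i ∈ Finset.Icc 3 e, (i - 2) + a * ∑ i ∈ Finset.Icc j l, (i - 2)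
            = ∑ i ∈ Finset.Icc 3 e, (i - 2) * a + ∑ i ∈ Finset.Icc j l, (i - 2) * a := by
              rw [Finset.mul_sum, Finset.mul_sum]
              congr 1 <;> exact Finset.sum_congr rfl (fun i _ => mul_comm _ _)
          _ = ∑ i ∈ Finset.Icc 3 e, ((i - 2) * a + if i ∈ Finset.Icc j l then (i - 2) * a else 0) :=
              expand.symm
          _ ≤ _ := step
      have hNat : 6 * (n - 1) + a * ((e - 1) * (e - 2)) + a * ((l - 1) * (l - 2))
          ≤ 6 * S + a * ((j - 2) * (j - 3)) := by
        have g2 := gauss2 hj3 l (by omega)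
        have e1 : a * ((e - 1) * (e - 2)) = 2 * (a * ∑ i ∈ Finset.Icc 3 e, (i - 2)) := by
          rw [← gauss1]; ring
        have e2 : a * ((l - 1) * (l - 2))
            = a * ((j - 2) * (j - 3)) + 2 * (a * ∑ i ∈ Finset.Icc j l, (i - 2)) := by
          rw [← g2]; ring
        have h2 : a * ∑ i ∈ Finset.Icc 3 e, (i - 2) + a * ∑ i ∈ Finset.Icc j l, (i - 2) ≤ 3 * S' :=
          le_trans hsum12 hmaster
        omega
      have hcast : ((n : ℝ) - 1) + (a : ℝ) * ((((e : ℝ) - 1) * ((e : ℝ) - 2)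
            + ((l : ℝ) - 1) * ((l : ℝ) - 2) - ((j : ℝ) - 2) * ((j : ℝ) - 3))) / 6 ≤ (S : ℝ) := by
        have h6 : ((6 * (n - 1) + a * ((e - 1) * (e - 2)) + a * ((l - 1) * (l - 2)) : ℕ) : ℝ)
            ≤ ((6 * S + a * ((j - 2) * (j - 3)) : ℕ) : ℝ) := by exact_mod_cast hNat
        push_cast [Nat.cast_sub (show 1 ≤ n by omega), Nat.cast_sub (show 1 ≤ e by omega),
          Nat.cast_sub (show 2 ≤ e by omega), Nat.cast_sub (show 1 ≤ l by omega),
          Nat.cast_sub (show 2 ≤ l by omega), Nat.cast_sub (show 2 ≤ j by omega),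
          Nat.cast_sub (show 3 ≤ j by omega)] at h6
        linarith
      have hP : 2 * ((r : ℝ) - 3) ^ 2 ≤ ((e : ℝ) - 1) * ((e : ℝ) - 2)
          + ((l : ℝ) - 1) * ((l : ℝ) - 2) - ((j : ℝ) - 2) * ((j : ℝ) - 3) := by
        have hJn : j + r = e + 3 := by omega
        have hJ' := congrArg (fun k : ℕ => (k : ℝ)) hJn
        push_cast at hJ'
        have hjR : (j : ℝ) = (e : ℝ) + 3 - (r : ℝ) := by linarith
        have hjj : ((j : ℝ) - 2) * ((j : ℝ) - 3)
            = ((e : ℝ) - (r : ℝ) + 1) * ((e : ℝ) - (r : ℝ)) := by rw [hjR]; ring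
        have hL : 2 * (r : ℝ) - (e : ℝ) - 3 ≤ (l : ℝ) := by
          have hcast2 := (Nat.cast_le (α := ℝ)).mpr hjl_low
          push_cast at hcast2
          linarith
        have hcn : 2 * e + 6 ≤ 3 * r := by omega
        have hc := (Nat.cast_le (α := ℝ)).mpr hcn
        push_cast at hc
        have hb1 : (0 : ℝ) ≤ (l : ℝ) - (2 * (r : ℝ) - (e : ℝ) - 3) := by linarith
        have hL0 : (2 : ℝ) ≤ 2 * (r : ℝ) - (e : ℝ) - 3 := by linarith
        have hb2 : (0 : ℝ) ≤ (l : ℝ) + (2 * (r : ℝ) - (e : ℝ) - 3) - 3 := by linarith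
        have hb3 : (0 : ℝ) ≤ ((e : ℝ) - (r : ℝ) + 1) * ((e : ℝ) - (r : ℝ) + 4) := by nlinarith
        rw [hjj]
        nlinarith [mul_nonneg hb1 hb2, hb3]
      have := endgame hA hM hcast hP
      linarith

end Stmt5Aux

theorem stmt5 {V : Type*} [Fintype V] [DecidableEq V] (G : SimpleGraph V)
    [DecidableRel G.Adj] (n δ : ℕ) (hn : Fintype.card V = n) (hδ : G.minDegree = δ) (hconn : G.Connected) (hsmall : (δ : ℝ) < (n : ℝ) / 4 - 1) :
    (((⨅ v : V, Finset.univ.sup fun w : V => G.dist v w) : ℕ) : ℝ) - (⨅ v : V, (∑ w : V, (G.dist v w : ℝ)) / ((n : ℝ) - 1)) ≤ 3 * (n : ℝ) / (4 * ((δ : ℝ) + 1)) + (8 * (δ : ℝ) + 5) / (4 * ((δ : ℝ) + 1)) := by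
  haveI : Nonempty V := hconn.nonempty
  have hn5 : 5 ≤ n := by
    by_contra h
    push_neg at h
    have h4 : (n : ℝ) ≤ 4 := by
      have : n ≤ 4 := by omega
      exact_mod_cast this
    have h0 : (0 : ℝ) ≤ (δ : ℝ) := Nat.cast_nonneg δ
    linarith
  subst hδ
  have hB : ∀ u : V, (((⨅ v : V, Finset.univ.sup fun w : V => G.dist v w) : ℕ) : ℝ)
      - (3 * (n : ℝ) / (4 * ((G.minDegree : ℝ) + 1))
        + (8 * (G.minDegree : ℝ) + 5) / (4 * ((G.minDegree : ℝ) + 1)))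
      ≤ (∑ w : V, (G.dist u w : ℝ)) / ((n : ℝ) - 1) := by
    intro u
    have hk := Stmt5Aux.key G hconn u n hn hn5
    have hA : (0 : ℝ) < (G.minDegree : ℝ) + 1 := by positivity
    have heq : 3 * ((n : ℝ) - 1) / (4 * ((G.minDegree : ℝ) + 1)) + 2
        = 3 * (n : ℝ) / (4 * ((G.minDegree : ℝ) + 1))
          + (8 * (G.minDegree : ℝ) + 5) / (4 * ((G.minDegree : ℝ) + 1)) := by
      field_simp
      ring
    rw [heq] at hk
    linarith
  have hInf := le_ciInf hB
  linarith [hInf]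
end

section
/- Let n, δ ∈ ℕ with δ ≥ 3 and n ≥ 7. If G is a connected, triangle-free graph of order n and minimum degree δ, then ρ(G) − π(G) ≤ (n+1)/(2δ) + 4. -/
open Finset

private lemma dist_getVert_le' {V : Type*} {G : SimpleGraph V} (hconn : G.Connected)
    {u v : V} (p : G.Walk u v) : ∀ j : ℕ, G.dist u (p.getVert j) ≤ j := by
  intro j
  induction j with
  | zero => simp
  | succ j ih =>
    by_cases hj : j < p.length
    · have h1 : G.dist (p.getVert j) (p.getVert (j+1)) = 1 :=
        SimpleGraph.dist_eq_one_iff_adj.mpr (p.adj_getVert_succ hj)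
      have := hconn.dist_triangle (u := u) (v := p.getVert j) (w := p.getVert (j+1))
      omega
    · have h1 : p.getVert (j+1) = v := p.getVert_of_length_le (by omega)
      have h2 : p.getVert j = v := p.getVert_of_length_le (by omega)
      rw [h1, ← h2]; omega

private lemma dist_getVert_eq {V : Type*} {G : SimpleGraph V} (hconn : G.Connected)
    {u v : V} (p : G.Walk u v) (hp : p.length = G.dist u v) {j : ℕ} (hj : j ≤ p.length) :
    G.dist u (p.getVert j) = j ∧ G.dist v (p.getVert j) = p.length - j := by
  have h1 : G.dist u (p.getVert j) ≤ j := dist_getVert_le' hconn p j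
  have h2 : G.dist v (p.getVert j) ≤ p.length - j := by
    have := dist_getVert_le' hconn p.reverse (p.length - j)
    rwa [p.getVert_reverse, Nat.sub_sub_self hj] at this
  have h3 := hconn.dist_triangle (u := u) (v := p.getVert j) (w := v)
  have h4 : G.dist (p.getVert j) v = G.dist v (p.getVert j) := SimpleGraph.dist_comm ..
  omega

set_option maxHeartbeats 1000000 in
theorem stmt6 {V : Type*} [Fintype V] [DecidableEq V] (G : SimpleGraph V)
    [DecidableRel G.Adj] (n δ : ℕ) (hn : Fintype.card V = n) (hδ : G.minDegree = δ) (hconn : G.Connected) (h3 : 3 ≤ δ) (h7 : 7 ≤ n) (htf : G.CliqueFree 3) :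
    (⨆ v : V, (∑ w : V, (G.dist v w : ℝ)) / ((n : ℝ) - 1)) - (⨅ v : V, (∑ w : V, (G.dist v w : ℝ)) / ((n : ℝ) - 1)) ≤ ((n : ℝ) + 1) / (2 * (δ : ℝ)) + 4 := by
  classical
  have hVne : Nonempty V := by rw [← Fintype.card_pos_iff]; omega
  obtain ⟨u, -, hu⟩ := Finset.exists_max_image (univ : Finset V)
    (fun x => ∑ w, G.dist x w) ⟨Classical.arbitrary V, mem_univ _⟩
  obtain ⟨v, -, hv⟩ := Finset.exists_min_image (univ : Finset V)
    (fun x => ∑ w, G.dist x w) ⟨Classical.arbitrary V, mem_univ _⟩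
  have hn1 : (0:ℝ) < (n:ℝ) - 1 := by
    have : (7:ℝ) ≤ (n:ℝ) := by exact_mod_cast h7
    linarith
  have hδn : δ + 1 ≤ n := by
    have h1 := G.minDegree_le_degree (Classical.arbitrary V)
    have h2 := G.degree_lt_card_verts (Classical.arbitrary V)
    omega
  set dd : ℕ := G.dist u v with hdd
  -- per-vertex upper bound on the potential
  have hfle : ∀ w : V, (G.dist u w : ℤ) - (G.dist v w : ℤ) ≤ (dd : ℤ) := by
    intro w
    have h1 := hconn.dist_triangle (u := u) (v := v) (w := w)
    omega
  -- KEY combinatorial inequality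
  have key : 2 * ((∑ w, G.dist u w : ℤ) - (∑ w, G.dist v w : ℤ)) ≤
      2 * n * dd - δ * ((dd:ℤ)^2 - 4) := by
    have hSf : (∑ w, G.dist u w : ℤ) - (∑ w, G.dist v w : ℤ)
        = ∑ w : V, ((G.dist u w : ℤ) - (G.dist v w : ℤ)) := by
      push_cast [Finset.sum_sub_distrib]; ring
    by_cases hd2 : dd ≤ 1
    · -- trivial case
      have h1 : (∑ w : V, ((G.dist u w : ℤ) - (G.dist v w : ℤ))) ≤ ∑ _w : V, (dd:ℤ) :=
        Finset.sum_le_sum (fun w _ => hfle w)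
      rw [hSf]
      simp only [Finset.sum_const, Finset.card_univ, hn, nsmul_eq_mul] at h1
      have hdd4 : ((dd:ℤ)^2 - 4) ≤ 0 := by
        have : (dd:ℤ) ≤ 1 := by exact_mod_cast hd2
        nlinarith
      have hδ0 : (0:ℤ) ≤ (δ:ℤ) := by positivity
      nlinarith
    · push_neg at hd2
      obtain ⟨p, hp⟩ := (hconn u v).exists_walk_length_eq_dist
      set T : ℕ := (dd + 2) / 4 with hT
      have hTb : 4 * T ≤ dd + 2 ∧ dd - 1 ≤ 4 * T := by
        have := Nat.div_add_mod (dd + 2) 4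
        have := Nat.mod_lt (dd + 2) (show 0 < 4 by norm_num)
        omega
      -- the path vertices
      set x : ℕ → V := fun j => p.getVert j with hx
      have hxd : ∀ j ≤ dd, G.dist u (x j) = j ∧ G.dist v (x j) = dd - j := by
        intro j hj
        have := dist_getVert_eq hconn p hp (j := j) (by omega)
        rwa [hp] at this
      -- bands
      set B : ℕ → Finset V := fun t =>
        G.neighborFinset (x (4*t)) ∪ G.neighborFinset (x (4*t+1)) with hB
      -- band membership controls the potential
      have hband : ∀ t < T, ∀ w ∈ B t,
          (8*t : ℤ) - dd - 2 ≤ (G.dist u w : ℤ) - (G.dist v w : ℤ) ∧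
          (G.dist u w : ℤ) - (G.dist v w : ℤ) ≤ (8*t : ℤ) - dd + 4 := by
        intro t ht w hw
        have hj : ∀ j ≤ dd, G.Adj (x j) w →
            ((j:ℤ) - 1 ≤ G.dist u w ∧ (G.dist u w : ℤ) ≤ j + 1 ∧
             (dd:ℤ) - j - 1 ≤ G.dist v w ∧ (G.dist v w : ℤ) ≤ (dd:ℤ) - j + 1) := by
          intro j hjd hadj
          obtain ⟨hju, hjv⟩ := hxd j hjd
          have e1 : G.dist (x j) w = 1 := SimpleGraph.dist_eq_one_iff_adj.mpr hadj
          have e2 : G.dist w (x j) = 1 := by rw [SimpleGraph.dist_comm]; exact e1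
          have t1 := hconn.dist_triangle (u := u) (v := x j) (w := w)
          have t2 := hconn.dist_triangle (u := u) (v := w) (w := x j)
          have t3 := hconn.dist_triangle (u := v) (v := x j) (w := w)
          have t4 := hconn.dist_triangle (u := v) (v := w) (w := x j)
          omega
        have hwB := hw
        rw [hB] at hwB
        rcases Finset.mem_union.mp hwB with hw1 | hw1
        · have hadj : G.Adj (x (4*t)) w := by rwa [SimpleGraph.mem_neighborFinset] at hw1
          have := hj (4*t) (by omega) hadj
          push_cast at this ⊢
          omega
        · have hadj : G.Adj (x (4*t+1)) w := by rwa [SimpleGraph.mem_neighborFinset] at hw1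
          have := hj (4*t+1) (by omega) hadj
          push_cast at this ⊢
          omega
      -- bands are large
      have hcard : ∀ t < T, 2 * δ ≤ (B t).card := by
        intro t ht
        have hadj : G.Adj (x (4*t)) (x (4*t+1)) := by
          have : 4*t < p.length := by omega
          exact p.adj_getVert_succ this
        have hdisj : Disjoint (G.neighborFinset (x (4*t))) (G.neighborFinset (x (4*t+1))) := by
          rw [Finset.disjoint_left]
          intro z hz1 hz2
          rw [SimpleGraph.mem_neighborFinset] at hz1 hz2
          exact htf {x (4*t), x (4*t+1), z}
            (SimpleGraph.is3Clique_triple_iff.mpr ⟨hadj, hz1, hz2⟩)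
        have : (B t).card = (G.neighborFinset (x (4*t))).card
            + (G.neighborFinset (x (4*t+1))).card := by
          rw [hB]; exact Finset.card_union_of_disjoint hdisj
        have d1 : δ ≤ (G.neighborFinset (x (4*t))).card := by
          rw [← SimpleGraph.degree]; rw [← hδ]; exact G.minDegree_le_degree _
        have d2 : δ ≤ (G.neighborFinset (x (4*t+1))).card := by
          rw [← SimpleGraph.degree]; rw [← hδ]; exact G.minDegree_le_degree _
        omega
      -- bands are pairwise disjoint
      have hpd : (Finset.range T : Set ℕ).PairwiseDisjoint B := by
        intro a ha b hb hab
        simp only [Finset.coe_range, Set.mem_Iio] at ha hb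
        rw [Function.onFun, Finset.disjoint_left]
        intro w hwa hwb
        obtain ⟨ha1, ha2⟩ := hband a ha w hwa
        obtain ⟨hb1, hb2⟩ := hband b hb w hwb
        rcases Nat.lt_or_ge a b with h | h
        · have : (8*a : ℤ) + 8 ≤ 8*b := by push_cast; omega
          omega
        · have hba : b < a := by omega
          have : (8*b : ℤ) + 8 ≤ 8*a := by push_cast; omega
          omega
      -- assemble
      set g : V → ℤ := fun w => (dd:ℤ) - ((G.dist u w : ℤ) - (G.dist v w : ℤ)) with hg
      have hg0 : ∀ w : V, 0 ≤ g w := fun w => by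
        have := hfle w; simp only [hg]; omega
      have step1 : ∑ t ∈ Finset.range T, ∑ w ∈ B t, g w ≤ ∑ w : V, g w := by
        rw [← Finset.sum_biUnion hpd]
        exact Finset.sum_le_sum_of_subset_of_nonneg (Finset.subset_univ _)
          (fun w _ _ => hg0 w)
      have step2 : ∀ t < T, (2*δ : ℤ) * (2*dd - 8*t - 4) ≤ ∑ w ∈ B t, g w := by
        intro t ht
        have hm : ∀ w ∈ B t, (2*(dd:ℤ) - 8*t - 4) ≤ g w := by
          intro w hw
          have := (hband t ht w hw).2
          simp only [hg]; omega
        have := Finset.card_nsmul_le_sum (B t) g (2*(dd:ℤ) - 8*t - 4) hm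
        rw [nsmul_eq_mul] at this
        have hc : (2*δ:ℤ) ≤ ((B t).card : ℤ) := by exact_mod_cast hcard t ht
        have hco : (0:ℤ) ≤ 2*(dd:ℤ) - 8*t - 4 := by
          have h1 : t < T := ht
          push_cast
          omega
        nlinarith
      have step3 : ∑ t ∈ Finset.range T, (2*δ : ℤ) * (2*dd - 8*t - 4)
          ≤ ∑ w : V, g w :=
        le_trans (Finset.sum_le_sum (fun t ht => step2 t (Finset.mem_range.mp ht))) step1
      have hsumT : ∀ m : ℕ, ∑ t ∈ Finset.range m, (2*(dd:ℤ) - 8*t - 4)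
          = 2*dd*m - 4*(m:ℤ)^2 := by
        intro m
        induction m with
        | zero => simp
        | succ k ih =>
          rw [Finset.sum_range_succ, ih]
          push_cast; ring
      have hgsum : ∑ w : V, g w = (n:ℤ)*dd -
          ((∑ w, G.dist u w : ℤ) - (∑ w, G.dist v w : ℤ)) := by
        simp only [hg]
        rw [Finset.sum_sub_distrib, Finset.sum_const, Finset.card_univ, hn, hSf,
          Finset.sum_sub_distrib]
        push_cast [Finset.sum_sub_distrib]
        ring
      rw [← Finset.mul_sum, hsumT T] at step3
      rw [hgsum] at step3
      -- now pure arithmetic: with s = 4T, dd-1 ≤ s ≤ dd+2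
      have hs1 : ((dd:ℤ) - 1) ≤ 4*(T:ℤ) := by push_cast; omega
      have hs2 : (4*(T:ℤ)) ≤ (dd:ℤ) + 2 := by push_cast; omega
      have hδ0 : (0:ℤ) ≤ (δ:ℤ) := by positivity
      nlinarith [step3, mul_nonneg hδ0 (mul_nonneg
        (by linarith : (0:ℤ) ≤ (dd:ℤ) - 4*(T:ℤ) + 2)
        (by linarith : (0:ℤ) ≤ 1 - ((dd:ℤ) - 4*(T:ℤ))))]
  -- now the analytic part
  have hSup : (⨆ x : V, (∑ w : V, (G.dist x w : ℝ)) / ((n : ℝ) - 1))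
      ≤ (∑ w : V, (G.dist u w : ℝ)) / ((n : ℝ) - 1) := by
    apply ciSup_le
    intro x
    have hnum : (∑ w : V, (G.dist x w : ℝ)) ≤ ∑ w : V, (G.dist u w : ℝ) := by
      exact_mod_cast hu x (mem_univ x)
    exact div_le_div_of_nonneg_right hnum hn1.le
  have hInf : (∑ w : V, (G.dist v w : ℝ)) / ((n : ℝ) - 1)
      ≤ ⨅ x : V, (∑ w : V, (G.dist x w : ℝ)) / ((n : ℝ) - 1) := by
    apply le_ciInf
    intro x
    have hnum : (∑ w : V, (G.dist v w : ℝ)) ≤ ∑ w : V, (G.dist x w : ℝ) := by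
      exact_mod_cast hv x (mem_univ x)
    exact div_le_div_of_nonneg_right hnum hn1.le
  have hred : (⨆ x : V, (∑ w : V, (G.dist x w : ℝ)) / ((n : ℝ) - 1)) -
      (⨅ x : V, (∑ w : V, (G.dist x w : ℝ)) / ((n : ℝ) - 1)) ≤
      ((∑ w : V, (G.dist u w : ℝ)) - (∑ w : V, (G.dist v w : ℝ))) / ((n : ℝ) - 1) := by
    rw [← div_sub_div_same]
    exact sub_le_sub hSup hInf
  refine le_trans hred ?_
  have keyR : 2 * ((∑ w : V, (G.dist u w : ℝ)) - (∑ w : V, (G.dist v w : ℝ))) ≤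
      2 * (n:ℝ) * (dd:ℝ) - (δ:ℝ) * ((dd:ℝ)^2 - 4) := by
    exact_mod_cast key
  have h3R : (3:ℝ) ≤ (δ:ℝ) := by exact_mod_cast h3
  have h7R : (7:ℝ) ≤ (n:ℝ) := by exact_mod_cast h7
  have hδnR : (δ:ℝ) + 1 ≤ (n:ℝ) := by exact_mod_cast hδn
  have hD0 : (0:ℝ) ≤ (dd:ℝ) := by positivity
  have h2δ : (0:ℝ) < 2 * (δ:ℝ) := by linarith
  have hrw : ((n:ℝ) + 1) / (2 * (δ:ℝ)) + 4 = (((n:ℝ) + 1) + 8 * δ) / (2 * δ) := by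
    field_simp
    ring
  rw [hrw, div_le_div_iff₀ hn1 h2δ]
  nlinarith [mul_le_mul_of_nonneg_left keyR (by linarith : (0:ℝ) ≤ (δ:ℝ)),
    sq_nonneg ((n:ℝ) - (δ:ℝ) * (dd:ℝ)),
    mul_le_mul_of_nonneg_left hδnR (by linarith : (0:ℝ) ≤ (δ:ℝ)),
    mul_le_mul_of_nonneg_left h7R (by linarith : (0:ℝ) ≤ (δ:ℝ))]
end

section
/- Let G be a C₄-free graph of minimum degree δ and let v be a vertex of G. Then the number of vertices at distance at most 2 from v is at least δ² − 2⌊δ/2⌋ + 1. -/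
open Finset

lemma even_card_invol {V : Type*} [DecidableEq V] (f : V → V) (M : Finset V)
    (hmem : ∀ u ∈ M, f u ∈ M) (hinv : ∀ u ∈ M, f (f u) = u) (hne : ∀ u ∈ M, f u ≠ u) :
    Even M.card := by
  induction M using Finset.strongInduction with
  | _ M ih =>
    rcases M.eq_empty_or_nonempty with rfl | ⟨u, hu⟩
    · simp
    · have hfu : f u ∈ M := hmem u hu
      have hfune : f u ≠ u := hne u hu
      set M' := M \ {u, f u} with hM'
      have hsub : M' ⊂ M := by
        refine Finset.sdiff_ssubset ?_ (by simp)
        intro x hx; simp at hx; rcases hx with rfl | rfl <;> assumption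
      have h1 : ∀ w ∈ M', f w ∈ M' := by
        intro w hw
        simp only [hM', Finset.mem_sdiff, Finset.mem_insert, Finset.mem_singleton] at hw ⊢
        obtain ⟨hwM, hwne⟩ := hw
        push_neg at hwne ⊢
        refine ⟨hmem w hwM, ?_, ?_⟩
        · intro h; exact hwne.2 (by rw [← hinv w hwM, h])
        · intro h; exact hwne.1 (by rw [← hinv w hwM, h, hinv u hu])
      have h2 : ∀ w ∈ M', f (f w) = w := fun w hw => hinv w (Finset.mem_sdiff.mp hw).1
      have h3 : ∀ w ∈ M', f w ≠ w := fun w hw => hne w (Finset.mem_sdiff.mp hw).1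
      have hcard : M.card = M'.card + 2 := by
        have : M'.card = M.card - 2 := by
          rw [hM', Finset.card_sdiff_of_subset (by intro x hx; simp at hx; rcases hx with rfl | rfl <;> assumption)]
          simp [hfune.symm]
        have h2le : 2 ≤ M.card := by
          have := Finset.one_lt_card.mpr ⟨u, hu, f u, hfu, hfune.symm⟩
          omega
        omega
      rw [hcard]
      obtain ⟨t, ht⟩ := ih M' hsub h1 h2 h3
      exact ⟨t + 1, by omega⟩

lemma arith_key (δ d e : ℕ) (h2 : 2 ≤ δ) (hdδ : δ ≤ d) (he : Even e) (hed : e ≤ d) :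
    δ ^ 2 - 2 * (δ / 2) + 1 ≤ 1 + d + e * (δ - 2) + (d - e) * (δ - 1) := by
  obtain ⟨p, rfl⟩ : ∃ p, δ = p + 2 := ⟨δ - 2, by omega⟩
  obtain ⟨t, rfl⟩ := he
  obtain ⟨m, rfl⟩ : ∃ m, d = t + t + m := ⟨d - (t + t), by omega⟩
  have h1 : (p + 2) ^ 2 = p * p + 4 * p + 4 := by ring
  have h2' : (t + t) * (p + 2 - 2) = 2 * (t * p) := by simp; ring
  have h3 : (t + t + m - (t + t)) * (p + 2 - 1) = m * p + m := by simp; ring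
  have h4 : p * p + 2 * p ≤ 2 * (t * p) + m * p := by
    have h := Nat.mul_le_mul_left p hdδ
    calc p * p + 2 * p = p * (p + 2) := by ring
      _ ≤ p * (t + t + m) := h
      _ = 2 * (t * p) + m * p := by ring
  have h5 : p + 1 ≤ 2 * ((p + 2) / 2) := by omega
  rw [h1, h2', h3]
  clear h1 h2' h3
  generalize p * p = P at h4 ⊢
  generalize t * p = T at h4 ⊢
  generalize m * p = Q at h4 ⊢
  omega

theorem stmt7 {V : Type*} [Fintype V] [DecidableEq V] (G : SimpleGraph V)
    [DecidableRel G.Adj] (δ : ℕ) (hδ : G.minDegree = δ)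
    (hc4 : (∀ a b c d : V, G.Adj a b → G.Adj b c → G.Adj c d → G.Adj d a → a ≠ c → b ≠ d → False)) (v : V) :
    δ ^ 2 - 2 * (δ / 2) + 1 ≤
      Set.ncard {w : V | w = v ∨ G.Adj v w ∨ ∃ x, G.Adj v x ∧ G.Adj x w} := by
  classical
  have hnev : Nonempty V := ⟨v⟩
  -- unique common neighbor
  have key : ∀ a c : V, a ≠ c → ∀ b ∈ G.neighborFinset a ∩ G.neighborFinset c,
      ∀ b' ∈ G.neighborFinset a ∩ G.neighborFinset c, b = b' := by
    intro a c hac b hb b' hb'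
    simp only [Finset.mem_inter, SimpleGraph.mem_neighborFinset] at hb hb'
    by_contra hbd
    exact hc4 a b c b' hb.1 hb.2.symm hb'.2 hb'.1.symm hac hbd
  set X : Finset V := insert v (G.neighborFinset v) with hX
  set F : V → Finset V := fun u => G.neighborFinset u \ X with hF
  set B : Finset V := (G.neighborFinset v).biUnion F with hB
  have hdeg : ∀ u : V, δ ≤ G.degree u := fun u => hδ ▸ G.minDegree_le_degree u
  set d := G.degree v with hd
  have hdδ : δ ≤ d := hdeg v
  have hset : {w : V | w = v ∨ G.Adj v w ∨ ∃ x, G.Adj v x ∧ G.Adj x w} = ↑(X ∪ B) := by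
    ext w
    simp only [Set.mem_setOf_eq, Finset.coe_union, Set.mem_union, Finset.mem_coe,
      hX, hB, hF, Finset.mem_insert, Finset.mem_biUnion, Finset.mem_sdiff,
      SimpleGraph.mem_neighborFinset]
    constructor
    · rintro (rfl | h | ⟨x, hx1, hx2⟩)
      · exact Or.inl (Or.inl rfl)
      · exact Or.inl (Or.inr h)
      · by_cases hw : w = v ∨ G.Adj v w
        · rcases hw with rfl | hw
          exacts [Or.inl (Or.inl rfl), Or.inl (Or.inr hw)]
        · push_neg at hw
          refine Or.inr ⟨x, hx1, hx2, ?_⟩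
          tauto
    · rintro ((rfl | h) | ⟨x, hx1, hx2, _⟩)
      · exact Or.inl rfl
      · exact Or.inr (Or.inl h)
      · exact Or.inr (Or.inr ⟨x, hx1, hx2⟩)
  rw [hset, Set.ncard_coe_finset]
  -- disjointness of X and B
  have hXB : Disjoint X B := by
    rw [Finset.disjoint_left]
    intro x hxX hxB
    simp only [hB, Finset.mem_biUnion] at hxB
    obtain ⟨u, _, hxF⟩ := hxB
    exact (Finset.mem_sdiff.mp hxF).2 hxX
  have hcardX : X.card = d + 1 := by
    rw [hX, Finset.card_insert_of_notMem (by simp), SimpleGraph.card_neighborFinset_eq_degree]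
  -- pairwise disjointness of F u
  have hFdisj : ∀ u ∈ G.neighborFinset v, ∀ u' ∈ G.neighborFinset v, u ≠ u' →
      Disjoint (F u) (F u') := by
    intro u hu u' hu' huu'
    rw [Finset.disjoint_left]
    intro w hwu hwu'
    simp only [hF, Finset.mem_sdiff, SimpleGraph.mem_neighborFinset] at hwu hwu'
    rw [SimpleGraph.mem_neighborFinset] at hu hu'
    have hv : v ∈ G.neighborFinset u ∩ G.neighborFinset u' := by
      simp [SimpleGraph.mem_neighborFinset, hu.symm, hu'.symm]
    have hw : w ∈ G.neighborFinset u ∩ G.neighborFinset u' := by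
      simp [SimpleGraph.mem_neighborFinset, hwu.1, hwu'.1]
    have := key u u' huu' v hv w hw
    exact hwu.2 (this ▸ Finset.mem_insert_self v _)
  have hcardB : B.card = ∑ u ∈ G.neighborFinset v, (F u).card :=
    Finset.card_biUnion hFdisj
  -- the matching set M
  set M : Finset V := (G.neighborFinset v).filter
    (fun u => ∃ u' ∈ G.neighborFinset v, G.Adj u u') with hM
  -- per-vertex bounds
  have hinterX : ∀ u ∈ G.neighborFinset v,
      (G.neighborFinset u ∩ X).card ≤ 1 + (G.neighborFinset u ∩ G.neighborFinset v).card := by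
    intro u hu
    have hsub : G.neighborFinset u ∩ X ⊆ insert v (G.neighborFinset u ∩ G.neighborFinset v) := by
      intro w hw
      simp only [hX, Finset.mem_inter, Finset.mem_insert] at hw ⊢
      tauto
    calc (G.neighborFinset u ∩ X).card ≤ _ := Finset.card_le_card hsub
      _ ≤ (G.neighborFinset u ∩ G.neighborFinset v).card + 1 := Finset.card_insert_le _ _
      _ = 1 + (G.neighborFinset u ∩ G.neighborFinset v).card := by omega
  have hcommon : ∀ u ∈ G.neighborFinset v,
      (G.neighborFinset u ∩ G.neighborFinset v).card ≤ 1 := by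
    intro u hu
    rw [SimpleGraph.mem_neighborFinset] at hu
    exact Finset.card_le_one.mpr (fun b hb b' hb' => key u v hu.symm.ne b hb b' hb')
  have hFcard : ∀ u ∈ G.neighborFinset v,
      G.degree u ≤ (F u).card + (G.neighborFinset u ∩ X).card := by
    intro u hu
    have h := Finset.card_sdiff_add_card_inter (G.neighborFinset u) X
    have h2 : G.degree u = (G.neighborFinset u).card := rfl
    show G.degree u ≤ (G.neighborFinset u \ X).card + (G.neighborFinset u ∩ X).card
    omega
  -- per-vertex cardinality bounds
  have claim1 : ∀ u ∈ M, δ - 2 ≤ (F u).card := by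
    intro u hu
    have huN : u ∈ G.neighborFinset v := (Finset.mem_filter.mp hu).1
    have h1 := hFcard u huN
    have h2 := hinterX u huN
    have h3 := hcommon u huN
    have h4 := hdeg u
    omega
  have claim2 : ∀ u ∈ (G.neighborFinset v).filter
      (fun u => ¬ ∃ u' ∈ G.neighborFinset v, G.Adj u u'), δ - 1 ≤ (F u).card := by
    intro u hu
    rw [Finset.mem_filter] at hu
    obtain ⟨huN, hnp⟩ := hu
    have hempty : G.neighborFinset u ∩ G.neighborFinset v = ∅ := by
      rw [Finset.eq_empty_iff_forall_notMem]
      intro w hw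
      rw [Finset.mem_inter, SimpleGraph.mem_neighborFinset, SimpleGraph.mem_neighborFinset] at hw
      exact hnp ⟨w, by rw [SimpleGraph.mem_neighborFinset]; exact hw.2, hw.1⟩
    have h1 := hFcard u huN
    have h2 := hinterX u huN
    have h4 := hdeg u
    rw [hempty] at h2
    simp at h2
    omega
  -- sum bounds
  have hb1 : M.card * (δ - 2) ≤ ∑ u ∈ M, (F u).card := by
    have := Finset.card_nsmul_le_sum M (fun u => (F u).card) (δ - 2) claim1
    simpa [smul_eq_mul] using this
  have hb2 : ((G.neighborFinset v).filter
      (fun u => ¬ ∃ u' ∈ G.neighborFinset v, G.Adj u u')).card * (δ - 1) ≤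
      ∑ u ∈ (G.neighborFinset v).filter
        (fun u => ¬ ∃ u' ∈ G.neighborFinset v, G.Adj u u'), (F u).card := by
    have := Finset.card_nsmul_le_sum _ (fun u => (F u).card) (δ - 1) claim2
    simpa [smul_eq_mul] using this
  have hcards : M.card + ((G.neighborFinset v).filter
      (fun u => ¬ ∃ u' ∈ G.neighborFinset v, G.Adj u u')).card = d := by
    rw [hM]
    rw [Finset.card_filter_add_card_filter_not]
    exact (SimpleGraph.card_neighborFinset_eq_degree G v)
  have heM : M.card ≤ d := by omega
  have hBge : M.card * (δ - 2) + (d - M.card) * (δ - 1) ≤ B.card := by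
    rw [hcardB, ← Finset.sum_filter_add_sum_filter_not (G.neighborFinset v)
      (fun u => ∃ u' ∈ G.neighborFinset v, G.Adj u u')]
    have hq : d - M.card = ((G.neighborFinset v).filter
        (fun u => ¬ ∃ u' ∈ G.neighborFinset v, G.Adj u u')).card := by omega
    rw [hq]
    exact Nat.add_le_add (hM ▸ hb1) hb2
  -- evenness of M via partner involution
  have heven : Even M.card := by
    set g : V → V := fun u =>
      if h : ∃ u' ∈ G.neighborFinset v, G.Adj u u' then h.choose else u with hg
    have hgspec : ∀ u ∈ M, g u ∈ G.neighborFinset v ∧ G.Adj u (g u) := by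
      intro u hu
      have hp : ∃ u' ∈ G.neighborFinset v, G.Adj u u' := (Finset.mem_filter.mp hu).2
      rw [hg]
      simp only [dif_pos hp]
      exact hp.choose_spec
    have hgM : ∀ u ∈ M, g u ∈ M := by
      intro u hu
      obtain ⟨h1, h2⟩ := hgspec u hu
      have huN : u ∈ G.neighborFinset v := (Finset.mem_filter.mp hu).1
      rw [hM, Finset.mem_filter]
      exact ⟨h1, u, huN, h2.symm⟩
    have hgne : ∀ u ∈ M, g u ≠ u := by
      intro u hu
      exact ((hgspec u hu).2).ne'
    have hginv : ∀ u ∈ M, g (g u) = u := by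
      intro u hu
      obtain ⟨h1, h2⟩ := hgspec u hu
      obtain ⟨h1', h2'⟩ := hgspec (g u) (hgM u hu)
      rw [SimpleGraph.mem_neighborFinset] at h1
      have huN : u ∈ G.neighborFinset v := (Finset.mem_filter.mp hu).1
      have hu1 : g (g u) ∈ G.neighborFinset (g u) ∩ G.neighborFinset v := by
        rw [Finset.mem_inter, SimpleGraph.mem_neighborFinset]
        exact ⟨h2', h1'⟩
      have hu2 : u ∈ G.neighborFinset (g u) ∩ G.neighborFinset v := by
        rw [Finset.mem_inter, SimpleGraph.mem_neighborFinset]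
        exact ⟨h2.symm, huN⟩
      exact key (g u) v h1.symm.ne _ hu1 _ hu2
    exact even_card_invol g M hgM hginv hgne
  -- final assembly
  have hunion : (X ∪ B).card = X.card + B.card := Finset.card_union_of_disjoint hXB
  rw [hunion, hcardX]
  rcases le_or_gt 2 δ with h2 | h2
  · calc δ ^ 2 - 2 * (δ / 2) + 1
        ≤ 1 + d + M.card * (δ - 2) + (d - M.card) * (δ - 1) :=
          arith_key δ d M.card h2 hdδ heven heM
      _ = (d + 1) + (M.card * (δ - 2) + (d - M.card) * (δ - 1)) := by ring
      _ ≤ (d + 1) + B.card := Nat.add_le_add_left hBge _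
  · have hδ1 : δ ≤ 1 := by omega
    have : δ ^ 2 - 2 * (δ / 2) + 1 ≤ d + 1 := by
      interval_cases δ <;> simp <;> omega
    omega
end

section
/- Let n, δ ∈ ℕ with δ ≥ 3 and n ≥ 6. If G is a connected, C₄-free graph of order n and minimum degree δ, then ρ(G) − π(G) ≤ 5(n+1)/(4(δ² − 2⌊δ/2⌋ + 1)) + 101/20. -/
set_option maxHeartbeats 1000000

open Finset SimpleGraph

private lemma even_card_invol_s8 {α : Type*} [DecidableEq α] (f : α → α) :
    ∀ (s : Finset α), (∀ a ∈ s, f a ∈ s) → (∀ a ∈ s, f (f a) = a) →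
    (∀ a ∈ s, f a ≠ a) → Even s.card := by
  intro s
  induction s using Finset.strongInduction with
  | _ s ih =>
    intro h1 h2 h3
    rcases s.eq_empty_or_nonempty with rfl | ⟨a, ha⟩
    · simp
    · have hfa : f a ∈ s := h1 a ha
      have hne : f a ≠ a := h3 a ha
      set s' : Finset α := s \ {a, f a} with hs'
      have hsub : s' ⊂ s := by
        apply Finset.sdiff_ssubset (by intro x hx; simp at hx; rcases hx with rfl | rfl <;> assumption)
        simp
      have hmem : ∀ b ∈ s', f b ∈ s' := by
        intro b hb
        simp only [hs', Finset.mem_sdiff, Finset.mem_insert, Finset.mem_singleton] at hb ⊢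
        obtain ⟨hbs, hb2⟩ := hb
        push_neg at hb2
        constructor
        · exact h1 b hbs
        · push_neg
          constructor
          · rintro rfl
            exact hb2.2 (h2 b hbs).symm
          · intro hfb
            exact hb2.1 (by rw [← h2 b hbs, hfb, h2 a ha])
      have := ih s' hsub hmem (fun b hb => h2 b (Finset.mem_sdiff.mp hb).1)
        (fun b hb => h3 b (Finset.mem_sdiff.mp hb).1)
      have hcard : s.card = s'.card + 2 := by
        have hss : ({a, f a} : Finset α) ⊆ s := by
          intro x hx; simp at hx; rcases hx with rfl | rfl <;> assumption
        rw [hs', Finset.card_sdiff_of_subset hss, Finset.card_insert_of_notMem (by simp [Ne.symm hne]),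
          Finset.card_singleton]
        have : 2 ≤ s.card := by
          calc 2 = ({a, f a} : Finset α).card := by
                rw [Finset.card_insert_of_notMem (by simp [Ne.symm hne]), Finset.card_singleton]
            _ ≤ s.card := Finset.card_le_card hss
        omega
      rw [hcard]
      rcases this with ⟨t, ht⟩
      exact ⟨t + 1, by omega⟩

private lemma dist_start_getVert {V : Type*} (G : SimpleGraph V) (hconn : G.Connected)
    {u v : V} (p : G.Walk u v) (i : ℕ) : G.dist u (p.getVert i) ≤ i := by
  induction p generalizing i with
  | nil =>
    show G.dist _ (SimpleGraph.Walk.nil.getVert i) ≤ i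
    cases i <;> simp [SimpleGraph.Walk.getVert, SimpleGraph.dist_self]
  | @cons a b c h q ih =>
    cases i with
    | zero => simp [SimpleGraph.Walk.getVert_zero]
    | succ i =>
      rw [SimpleGraph.Walk.getVert_cons_succ]
      calc G.dist a (q.getVert i) ≤ G.dist a b + G.dist b (q.getVert i) :=
            hconn.dist_triangle
        _ ≤ 1 + i := by
            gcongr
            · simpa using G.dist_le (SimpleGraph.Walk.cons h SimpleGraph.Walk.nil)
            · exact ih i
        _ = i + 1 := by omega

private lemma dist_getVert_end {V : Type*} (G : SimpleGraph V)
    {u v : V} (p : G.Walk u v) (i : ℕ) : G.dist (p.getVert i) v ≤ p.length - i := by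
  induction p generalizing i with
  | nil =>
    show G.dist (SimpleGraph.Walk.nil.getVert i) _ ≤ _
    cases i <;> simp [SimpleGraph.Walk.getVert, SimpleGraph.dist_self]
  | @cons a b c h q ih =>
    cases i with
    | zero =>
      simpa using G.dist_le (SimpleGraph.Walk.cons h q)
    | succ i =>
      rw [SimpleGraph.Walk.getVert_cons_succ]
      calc G.dist (q.getVert i) _ ≤ q.length - i := ih i
        _ ≤ (SimpleGraph.Walk.cons h q).length - (i+1) := by
            rw [SimpleGraph.Walk.length_cons]; omega

private lemma ball_card_lb {V : Type*} [Fintype V] [DecidableEq V] (G : SimpleGraph V)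
    [DecidableRel G.Adj] (δ : ℕ) (h3 : 3 ≤ δ) (hdeg : ∀ w : V, δ ≤ G.degree w)
    (hc4 : (∀ a b c d : V, G.Adj a b → G.Adj b c → G.Adj c d → G.Adj d a → a ≠ c → b ≠ d → False))
    (c : V) :
    δ * δ - 2 * (δ / 2) + 1 ≤ (Finset.univ.filter fun w => G.dist c w ≤ 2).card := by
  classical
  set B := Finset.univ.filter fun w => G.dist c w ≤ 2 with hB
  set N := G.neighborFinset c with hN
  set A : V → Finset V := fun u => G.neighborFinset u \ insert c N with hA
  -- common neighbor uniqueness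
  have h_m : ∀ u ∈ N, (G.neighborFinset u ∩ N).card ≤ 1 := by
    intro u hu
    rw [Finset.card_le_one]
    intro a ha b hb
    by_contra hab
    simp only [hN, Finset.mem_inter, SimpleGraph.mem_neighborFinset] at ha hb hu
    exact hc4 u a c b ha.1 ha.2.symm hb.2 hb.1.symm (G.ne_of_adj hu).symm hab
  -- membership in ball
  have hcN : insert c N ⊆ B := by
    intro w hw
    rw [hB, Finset.mem_filter]
    refine ⟨Finset.mem_univ _, ?_⟩
    rcases Finset.mem_insert.mp hw with rfl | hw
    · simp [SimpleGraph.dist_self]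
    · rw [hN, SimpleGraph.mem_neighborFinset] at hw
      exact le_trans (G.dist_le (SimpleGraph.Walk.cons hw SimpleGraph.Walk.nil)) (by simp)
  have hAB : ∀ u ∈ N, A u ⊆ B := by
    intro u hu w hw
    rw [hA] at hw
    simp only [Finset.mem_sdiff, SimpleGraph.mem_neighborFinset] at hw
    rw [hN, SimpleGraph.mem_neighborFinset] at hu
    rw [hB, Finset.mem_filter]
    exact ⟨Finset.mem_univ _,
      le_trans (G.dist_le (SimpleGraph.Walk.cons hu (SimpleGraph.Walk.cons hw.1 SimpleGraph.Walk.nil))) (by simp)⟩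
  -- A u pairwise disjoint
  have hApd : (↑N : Set V).PairwiseDisjoint A := by
    intro u hu u' hu' hne
    simp only [Function.onFun]
    rw [Finset.disjoint_left]
    intro w hw hw'
    rw [hA] at hw hw'
    simp only [Finset.mem_sdiff, SimpleGraph.mem_neighborFinset, Finset.mem_insert] at hw hw'
    rw [Finset.mem_coe] at hu hu'
    rw [hN, SimpleGraph.mem_neighborFinset] at hu hu'
    have hwc : w ≠ c := by
      intro h; exact hw.2 (Or.inl h)
    exact hc4 c u w u' hu hw.1 hw'.1.symm hu'.symm (Ne.symm hwc) hne
  -- sizes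
  have hAcard : ∀ u ∈ N, δ ≤ (A u).card + (G.neighborFinset u ∩ N).card + 1 := by
    intro u hu
    have h1 : G.neighborFinset u ⊆ A u ∪ (G.neighborFinset u ∩ insert c N) := by
      intro w hw
      rw [Finset.mem_union, hA, Finset.mem_sdiff, Finset.mem_inter]
      by_cases hm : w ∈ insert c N
      · exact Or.inr ⟨hw, hm⟩
      · exact Or.inl ⟨hw, hm⟩
    have h2 : G.neighborFinset u ∩ insert c N ⊆ insert c (G.neighborFinset u ∩ N) := by
      intro w hw
      rw [Finset.mem_inter, Finset.mem_insert] at hw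
      rw [Finset.mem_insert, Finset.mem_inter]
      rcases hw.2 with rfl | hwN
      · exact Or.inl rfl
      · exact Or.inr ⟨hw.1, hwN⟩
    calc δ ≤ G.degree u := hdeg u
      _ = (G.neighborFinset u).card := (G.card_neighborFinset_eq_degree u).symm
      _ ≤ (A u ∪ (G.neighborFinset u ∩ insert c N)).card := Finset.card_le_card h1
      _ ≤ (A u).card + (G.neighborFinset u ∩ insert c N).card := Finset.card_union_le _ _
      _ ≤ (A u).card + (insert c (G.neighborFinset u ∩ N)).card :=
          Nat.add_le_add_left (Finset.card_le_card h2) _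
      _ ≤ (A u).card + ((G.neighborFinset u ∩ N).card + 1) :=
          Nat.add_le_add_left (Finset.card_insert_le _ _) _
      _ = (A u).card + (G.neighborFinset u ∩ N).card + 1 := by omega
  -- matched set and involution
  set Matched := N.filter (fun u => (G.neighborFinset u ∩ N).Nonempty) with hMdef
  have hsum_m : (∑ u ∈ N, (G.neighborFinset u ∩ N).card) ≤ Matched.card := by
    rw [← Finset.sum_filter_add_sum_filter_not N (fun u => (G.neighborFinset u ∩ N).Nonempty)]
    have e1 : ∑ u ∈ N.filter (fun u => ¬ (G.neighborFinset u ∩ N).Nonempty),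
        (G.neighborFinset u ∩ N).card = 0 := by
      apply Finset.sum_eq_zero
      intro u hu
      rw [Finset.mem_filter, Finset.not_nonempty_iff_eq_empty] at hu
      rw [hu.2, Finset.card_empty]
    rw [← hMdef] at *
    have e2 : ∑ u ∈ Matched, (G.neighborFinset u ∩ N).card ≤ Matched.card * 1 := by
      apply Finset.sum_le_card_nsmul
      intro u hu
      exact h_m u (Finset.mem_filter.mp hu).1
    omega
  have hMatchedEven : Even Matched.card := by
    set f : V → V := fun u =>
      if h : (G.neighborFinset u ∩ N).Nonempty then h.choose else u with hf
    have hfmem : ∀ u, (h : (G.neighborFinset u ∩ N).Nonempty) →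
        f u ∈ G.neighborFinset u ∩ N := by
      intro u h
      rw [hf]; simp only [dif_pos h]; exact h.choose_spec
    apply even_card_invol_s8 f Matched
    · intro u hu
      obtain ⟨huN, hune⟩ := Finset.mem_filter.mp hu
      have hm := hfmem u hune
      rw [Finset.mem_inter, SimpleGraph.mem_neighborFinset] at hm
      rw [hMdef, Finset.mem_filter]
      exact ⟨hm.2, ⟨u, by rw [Finset.mem_inter, SimpleGraph.mem_neighborFinset]; exact ⟨hm.1.symm, huN⟩⟩⟩
    · intro u hu
      obtain ⟨huN, hune⟩ := Finset.mem_filter.mp hu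
      have hm := hfmem u hune
      have hfuN : f u ∈ N := (Finset.mem_inter.mp hm).2
      have hadj : G.Adj u (f u) := by
        have := (Finset.mem_inter.mp hm).1
        rwa [SimpleGraph.mem_neighborFinset] at this
      have hne2 : (G.neighborFinset (f u) ∩ N).Nonempty :=
        ⟨u, by rw [Finset.mem_inter, SimpleGraph.mem_neighborFinset]; exact ⟨hadj.symm, huN⟩⟩
      have hm2 := hfmem (f u) hne2
      have hu_mem : u ∈ G.neighborFinset (f u) ∩ N := by
        rw [Finset.mem_inter, SimpleGraph.mem_neighborFinset]; exact ⟨hadj.symm, huN⟩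
      exact Finset.card_le_one.mp (h_m (f u) hfuN) _ hm2 _ hu_mem
    · intro u hu
      obtain ⟨huN, hune⟩ := Finset.mem_filter.mp hu
      have hm := hfmem u hune
      have : G.Adj u (f u) := by
        have := (Finset.mem_inter.mp hm).1
        rwa [SimpleGraph.mem_neighborFinset] at this
      exact (G.ne_of_adj this).symm
  -- assemble cardinalities
  have hcard_union : (insert c N).card + ∑ u ∈ N, (A u).card ≤ B.card := by
    have hdisj : Disjoint (insert c N) (N.biUnion A) := by
      rw [Finset.disjoint_left]
      intro w hw hw'
      obtain ⟨u, hu, hwA⟩ := Finset.mem_biUnion.mp hw'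
      rw [hA, Finset.mem_sdiff] at hwA
      exact hwA.2 hw
    have hsub : insert c N ∪ N.biUnion A ⊆ B := by
      apply Finset.union_subset hcN
      intro w hw
      obtain ⟨u, hu, hwA⟩ := Finset.mem_biUnion.mp hw
      exact hAB u hu hwA
    calc (insert c N).card + ∑ u ∈ N, (A u).card
        = (insert c N).card + (N.biUnion A).card := by
          rw [Finset.card_biUnion (fun u hu u' hu' hne => hApd hu hu' hne)]
      _ = (insert c N ∪ N.biUnion A).card := (Finset.card_union_of_disjoint hdisj).symm
      _ ≤ B.card := Finset.card_le_card hsub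
  have hNc : δ ≤ N.card := by
    rw [hN, G.card_neighborFinset_eq_degree]; exact hdeg c
  have hcinsert : (insert c N).card = N.card + 1 := by
    rw [Finset.card_insert_of_notMem (by rw [hN, SimpleGraph.mem_neighborFinset]; exact G.irrefl)]
  have hsumA : N.card * δ ≤ (∑ u ∈ N, (A u).card) + (∑ u ∈ N, (G.neighborFinset u ∩ N).card) + N.card := by
    calc N.card * δ = ∑ _u ∈ N, δ := by rw [Finset.sum_const, smul_eq_mul]
      _ ≤ ∑ u ∈ N, ((A u).card + (G.neighborFinset u ∩ N).card + 1) :=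
          Finset.sum_le_sum hAcard
      _ = _ := by rw [Finset.sum_add_distrib, Finset.sum_add_distrib, Finset.sum_const, smul_eq_mul, mul_one]
  -- final arithmetic
  have hprod : δ * δ + (N.card - δ) * 2 ≤ N.card * δ := by
    have e : N.card * δ = δ * δ + (N.card - δ) * δ := by
      rw [← Nat.add_mul, Nat.add_sub_cancel' hNc]
    rw [e]
    have : (N.card - δ) * 2 ≤ (N.card - δ) * δ := Nat.mul_le_mul_left _ (by omega)
    omega
  have hML : Matched.card ≤ N.card := Finset.card_le_card (Finset.filter_subset _ _)
  obtain ⟨t, ht⟩ := hMatchedEven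
  omega

private lemma gauss_sum : ∀ K : ℕ, ∑ j ∈ Finset.Icc 1 K, (10*(j:ℝ) - 4) = 5*(K:ℝ)^2 + K := by
  intro K
  induction K with
  | zero => simp
  | succ K ih =>
    have h : Finset.Icc 1 (K+1) = insert (K+1) (Finset.Icc 1 K) := by
      ext j; simp only [Finset.mem_Icc, Finset.mem_insert]; omega
    rw [h, Finset.sum_insert (by simp), ih]
    push_cast; ring

theorem stmt8 {V : Type*} [Fintype V] [DecidableEq V] (G : SimpleGraph V)
    [DecidableRel G.Adj] (n δ : ℕ) (hn : Fintype.card V = n) (hδ : G.minDegree = δ) (hconn : G.Connected) (h3 : 3 ≤ δ) (h6 : 6 ≤ n) (hc4 : (∀ a b c d : V, G.Adj a b → G.Adj b c → G.Adj c d → G.Adj d a → a ≠ c → b ≠ d → False)) :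
    (⨆ v : V, (∑ w : V, (G.dist v w : ℝ)) / ((n : ℝ) - 1)) - (⨅ v : V, (∑ w : V, (G.dist v w : ℝ)) / ((n : ℝ) - 1)) ≤ 5 * ((n : ℝ) + 1) / (4 * ((δ ^ 2 - 2 * (δ / 2) + 1 : ℕ) : ℝ)) + 101 / 20 := by
  classical
  have hVne : Nonempty V := Fintype.card_pos_iff.mp (by omega)
  have hnR : (6:ℝ) ≤ (n:ℝ) := by exact_mod_cast h6
  have hn1 : (0:ℝ) < (n:ℝ) - 1 := by linarith
  set Mn : ℕ := δ ^ 2 - 2 * (δ / 2) + 1 with hMne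
  have hMn7 : 7 ≤ Mn := by
    have h1 : 3*δ ≤ δ*δ := Nat.mul_le_mul_right δ h3
    have h2 : δ^2 = δ*δ := sq δ
    omega
  have hMR : (7:ℝ) ≤ (Mn:ℝ) := by exact_mod_cast hMn7
  set g : V → ℝ := fun w => ∑ w' : V, (G.dist w w' : ℝ) with hg
  obtain ⟨u, -, hu⟩ := Finset.exists_min_image Finset.univ g
    ⟨Classical.arbitrary V, Finset.mem_univ _⟩
  obtain ⟨v, -, hv⟩ := Finset.exists_max_image Finset.univ g
    ⟨Classical.arbitrary V, Finset.mem_univ _⟩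
  have step1 : (⨆ w : V, g w / ((n:ℝ)-1)) - (⨅ w : V, g w / ((n:ℝ)-1))
      ≤ (g v - g u)/((n:ℝ)-1) := by
    have h1 : (⨆ w : V, g w / ((n:ℝ)-1)) ≤ g v / ((n:ℝ)-1) :=
      ciSup_le (fun w => (div_le_div_iff_of_pos_right hn1).mpr (hv w (Finset.mem_univ w)))
    have h2 : g u / ((n:ℝ)-1) ≤ ⨅ w : V, g w / ((n:ℝ)-1) :=
      le_ciInf (fun w => (div_le_div_iff_of_pos_right hn1).mpr (hu w (Finset.mem_univ w)))
    have := sub_le_sub h1 h2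
    rwa [div_sub_div_same] at this
  set ℓ : ℕ := G.dist u v with hldef
  obtain ⟨p, hp⟩ := hconn.exists_walk_length_eq_dist u v
  set x : ℕ → V := fun i => p.getVert i with hx
  set K : ℕ := ℓ / 5 with hK
  have hdeg : ∀ w : V, δ ≤ G.degree w := fun w => hδ ▸ G.minDegree_le_degree w
  have hdux : ∀ i, i ≤ ℓ → G.dist u (x i) = i ∧ G.dist (x i) v + i = ℓ := by
    intro i hi
    have h1 : G.dist u (x i) ≤ i := dist_start_getVert G hconn p i
    have h2 : G.dist (x i) v ≤ ℓ - i := by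
      have := dist_getVert_end G p i; rwa [hp, ← hldef] at this
    have h4 : ℓ ≤ G.dist u (x i) + G.dist (x i) v := by
      rw [hldef]; exact hconn.dist_triangle
    omega
  set T : ℕ → Finset V := fun j => Finset.univ.filter (fun w => G.dist (x (5*j)) w ≤ 2) with hT
  have hTM : ∀ j, Mn ≤ (T j).card := by
    intro j
    show Mn ≤ (Finset.univ.filter fun w => G.dist (x (5*j)) w ≤ 2).card
    have h1 := ball_card_lb G δ h3 hdeg hc4 (x (5*j))
    have h2 : δ^2 = δ*δ := sq δ
    omega
  have hTdisj : ∀ j j', j ≤ K → j' ≤ K → j < j' → Disjoint (T j) (T j') := by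
    intro j j' hj hj' hlt
    have h5j : 5*j ≤ ℓ := by omega
    have h5j' : 5*j' ≤ ℓ := by omega
    have hd1 := (hdux (5*j) h5j).1
    have hd2 := (hdux (5*j') h5j').1
    have htr : G.dist u (x (5*j')) ≤ G.dist u (x (5*j)) + G.dist (x (5*j)) (x (5*j')) :=
      hconn.dist_triangle
    rw [Finset.disjoint_left]
    intro w hw hw'
    rw [hT, Finset.mem_filter] at hw hw'
    have htr2 : G.dist (x (5*j)) (x (5*j')) ≤ G.dist (x (5*j)) w + G.dist w (x (5*j')) :=
      hconn.dist_triangle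
    have hcomm : G.dist w (x (5*j')) = G.dist (x (5*j')) w := SimpleGraph.dist_comm
    omega
  have hub1 : ∀ w, (G.dist v w : ℝ) - G.dist u w ≤ (ℓ:ℝ) := by
    intro w
    have htr : G.dist v w ≤ G.dist v u + G.dist u w := hconn.dist_triangle
    have hcomm : G.dist v u = ℓ := by rw [hldef]; exact SimpleGraph.dist_comm
    rw [hcomm] at htr
    have := (Nat.cast_le (α := ℝ)).mpr htr
    push_cast at this
    linarith
  have hub2 : ∀ j, 1 ≤ j → j ≤ K → ∀ w ∈ T j,
      (G.dist v w : ℝ) - G.dist u w ≤ (ℓ:ℝ) + 4 - 10*(j:ℝ) := by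
    intro j hj1 hjK w hw
    have h5j : 5*j ≤ ℓ := by omega
    have hd1 := (hdux (5*j) h5j).1
    have hd2 := (hdux (5*j) h5j).2
    rw [hT, Finset.mem_filter] at hw
    have hxw : G.dist (x (5*j)) w ≤ 2 := hw.2
    -- upper bound for dist v w
    have htr1 : G.dist v w ≤ G.dist v (x (5*j)) + G.dist (x (5*j)) w := hconn.dist_triangle
    have hcm1 : G.dist v (x (5*j)) = G.dist (x (5*j)) v := SimpleGraph.dist_comm
    have hA : G.dist v w + 5*j ≤ ℓ + 2 := by omega
    -- lower bound for dist u w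
    have htr2 : G.dist u (x (5*j)) ≤ G.dist u w + G.dist w (x (5*j)) := hconn.dist_triangle
    have hcm2 : G.dist w (x (5*j)) = G.dist (x (5*j)) w := SimpleGraph.dist_comm
    have hBn : 5*j ≤ G.dist u w + 2 := by omega
    have hA' := (Nat.cast_le (α := ℝ)).mpr hA
    have hB' := (Nat.cast_le (α := ℝ)).mpr hBn
    push_cast at hA' hB'
    linarith
  set D : Finset V := (Finset.Icc 1 K).biUnion T with hD
  have hpd : (↑(Finset.Icc 1 K) : Set ℕ).Pairwise (Function.onFun Disjoint T) := by
    intro j hj j' hj' hne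
    simp only [Finset.coe_Icc, Set.mem_Icc] at hj hj'
    simp only [Function.onFun]
    rcases lt_or_gt_of_ne hne with h | h
    · exact hTdisj j j' hj.2 hj'.2 h
    · exact (hTdisj j' j hj'.2 hj.2 h).symm
  have hDcard : D.card = ∑ j ∈ Finset.Icc 1 K, (T j).card := by
    rw [hD]
    exact Finset.card_biUnion (fun j hj j' hj' hne => hpd (by simpa using hj) (by simpa using hj') hne)
  have hDn : D.card ≤ n := by rw [← hn]; exact Finset.card_le_univ D
  have hSsplit : g v - g u = (∑ w ∈ Finset.univ \ D, ((G.dist v w:ℝ) - G.dist u w))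
      + ∑ w ∈ D, ((G.dist v w:ℝ) - G.dist u w) := by
    rw [Finset.sum_sdiff (Finset.subset_univ D), hg]
    rw [Finset.sum_sub_distrib]
  have hb1 : ∑ w ∈ Finset.univ \ D, ((G.dist v w:ℝ) - G.dist u w) ≤ ((n:ℝ) - D.card) * ℓ := by
    have h1 : ∑ w ∈ Finset.univ \ D, ((G.dist v w:ℝ) - G.dist u w)
        ≤ (Finset.univ \ D).card • (ℓ:ℝ) :=
      Finset.sum_le_card_nsmul _ _ _ (fun w _ => hub1 w)
    rw [nsmul_eq_mul, Finset.card_sdiff_of_subset (Finset.subset_univ D), Finset.card_univ, hn] at h1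
    rwa [Nat.cast_sub hDn] at h1
  have hb2 : ∑ w ∈ D, ((G.dist v w:ℝ) - G.dist u w)
      ≤ (D.card:ℝ) * ℓ - (Mn:ℝ) * (5*(K:ℝ)^2 + K) := by
    rw [hD, Finset.sum_biUnion hpd]
    have inner : ∀ j ∈ Finset.Icc 1 K, ∑ w ∈ T j, ((G.dist v w:ℝ) - G.dist u w)
        ≤ ((T j).card : ℝ) * ℓ - (Mn:ℝ) * (10*(j:ℝ) - 4) := by
      intro j hj
      rw [Finset.mem_Icc] at hj
      have h1 : ∑ w ∈ T j, ((G.dist v w:ℝ) - G.dist u w)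
          ≤ (T j).card • ((ℓ:ℝ) + 4 - 10*(j:ℝ)) :=
        Finset.sum_le_card_nsmul _ _ _ (fun w hw => hub2 j hj.1 hj.2 w hw)
      rw [nsmul_eq_mul] at h1
      have hjR : (1:ℝ) ≤ (j:ℝ) := by exact_mod_cast hj.1
      have hcR : (Mn:ℝ) ≤ ((T j).card : ℝ) := by exact_mod_cast hTM j
      nlinarith [hcR, hjR, h1]
    calc ∑ j ∈ Finset.Icc 1 K, ∑ w ∈ T j, ((G.dist v w:ℝ) - G.dist u w)
        ≤ ∑ j ∈ Finset.Icc 1 K, (((T j).card : ℝ) * ℓ - (Mn:ℝ) * (10*(j:ℝ) - 4)) :=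
          Finset.sum_le_sum inner
      _ = (∑ j ∈ Finset.Icc 1 K, ((T j).card : ℝ)) * ℓ
          - (Mn:ℝ) * ∑ j ∈ Finset.Icc 1 K, (10*(j:ℝ) - 4) := by
          rw [Finset.sum_sub_distrib, ← Finset.sum_mul, ← Finset.mul_sum]
      _ = (D.card:ℝ) * ℓ - (Mn:ℝ) * (5*(K:ℝ)^2 + K) := by
          rw [gauss_sum, hDcard]; push_cast; ring
  have htot : g v - g u ≤ (n:ℝ)*ℓ - (Mn:ℝ)*(5*(K:ℝ)^2 + K) := by
    rw [hSsplit]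
    have := add_le_add hb1 hb2
    linarith
  have hlK : ℓ ≤ 5*K + 4 := by omega
  have hfin : (n:ℝ)*ℓ - (Mn:ℝ)*(5*(K:ℝ)^2 + K)
      ≤ ((n:ℝ)-1) * (5 * ((n:ℝ) + 1) / (4 * (Mn:ℝ)) + 101 / 20) := by
    have hlKR : (ℓ:ℝ) ≤ 5*(K:ℝ)+4 := by exact_mod_cast hlK
    have hK0 : (0:ℝ) ≤ (K:ℝ) := Nat.cast_nonneg K
    have e : ((n:ℝ)-1) * (5 * ((n:ℝ) + 1) / (4 * (Mn:ℝ)) + 101 / 20)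
        = (25*((n:ℝ)^2-1) + 101*(Mn:ℝ)*((n:ℝ)-1))/(20*(Mn:ℝ)) := by
      field_simp
      ring
    rw [e, le_div_iff₀ (by positivity)]
    have t1 : (n:ℝ)*ℓ ≤ (n:ℝ)*(5*(K:ℝ)+4) :=
      mul_le_mul_of_nonneg_left hlKR (by linarith)
    have t1' : (n:ℝ)*ℓ*(20*(Mn:ℝ)) ≤ (n:ℝ)*(5*(K:ℝ)+4)*(20*(Mn:ℝ)) :=
      mul_le_mul_of_nonneg_right t1 (by linarith)
    have t2 : 100*(Mn:ℝ)*(K:ℝ)*(n:ℝ) - 100*(Mn:ℝ)^2*(K:ℝ)^2 ≤ 25*(n:ℝ)^2 := by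
      nlinarith [sq_nonneg (2*(Mn:ℝ)*(K:ℝ) - (n:ℝ))]
    have t3 : (0:ℝ) ≤ 21*(Mn:ℝ)*(n:ℝ) - 101*(Mn:ℝ) - 25 := by
      nlinarith [mul_nonneg (by linarith : (0:ℝ) ≤ (Mn:ℝ)) (by linarith : (0:ℝ) ≤ (n:ℝ)-6)]
    have t4 : (0:ℝ) ≤ (Mn:ℝ)^2*(K:ℝ) := by positivity
    nlinarith [t1', t2, t3, t4]
  calc (⨆ w : V, g w / ((n:ℝ)-1)) - (⨅ w : V, g w / ((n:ℝ)-1))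
      ≤ (g v - g u)/((n:ℝ)-1) := step1
    _ ≤ 5 * ((n:ℝ) + 1) / (4 * (Mn:ℝ)) + 101 / 20 := by
        rw [div_le_iff₀ hn1]
        calc g v - g u ≤ (n:ℝ)*ℓ - (Mn:ℝ)*(5*(K:ℝ)^2 + K) := htot
          _ ≤ ((n:ℝ)-1) * (5 * ((n:ℝ) + 1) / (4 * (Mn:ℝ)) + 101 / 20) := hfin
          _ = (5 * ((n:ℝ) + 1) / (4 * (Mn:ℝ)) + 101 / 20) * ((n:ℝ)-1) := by ring
end

section
/- Let G be a connected triangle-free graph of order n and minimum degree δ ≥ 3. Then diam(G) ≤ 4⌈(n−δ−1)/(2δ)⌉. -/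
theorem stmt9 {V : Type*} [Fintype V] [DecidableEq V] (G : SimpleGraph V)
    [DecidableRel G.Adj] (n δ : ℕ) (hn : Fintype.card V = n) (hδ : G.minDegree = δ) (hconn : G.Connected) (h3 : 3 ≤ δ) (htf : G.CliqueFree 3) :
    (((Finset.univ.sup fun v : V => Finset.univ.sup fun w : V => G.dist v w) : ℕ) : ℝ) ≤ 4 * (⌈((n : ℝ) - (δ : ℝ) - 1) / (2 * (δ : ℝ))⌉ : ℝ) := by
  classical
  have hne : Nonempty V := hconn.nonempty
  set D : ℕ := Finset.univ.sup fun v : V => Finset.univ.sup fun w : V => G.dist v w with hD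
  -- the diameter is attained
  obtain ⟨u, -, hu⟩ := Finset.exists_mem_eq_sup (Finset.univ : Finset V)
    Finset.univ_nonempty (fun v : V => Finset.univ.sup fun w : V => G.dist v w)
  obtain ⟨w, -, hw⟩ := Finset.exists_mem_eq_sup (Finset.univ : Finset V)
    Finset.univ_nonempty (fun w : V => G.dist u w)
  have hduw : G.dist u w = D := by rw [hD, hu, ← hw]
  obtain ⟨p, hp⟩ := (hconn u w).exists_walk_length_eq_dist
  rw [hduw] at hp
  -- getVert distance bounds
  have hle : ∀ i : ℕ, G.dist u (p.getVert i) ≤ i := by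
    intro i
    induction i with
    | zero => simp
    | succ i ih =>
      by_cases h : i < p.length
      · have hadj := p.adj_getVert_succ h
        have h1 : G.dist (p.getVert i) (p.getVert (i + 1)) ≤ 1 :=
          G.dist_le (SimpleGraph.Walk.cons hadj SimpleGraph.Walk.nil)
        have := hconn.dist_triangle (u := u) (v := p.getVert i) (w := p.getVert (i + 1))
        omega
      · rw [p.getVert_of_length_le (by omega)]
        omega
  have hge : ∀ i : ℕ, i ≤ D → G.dist (p.getVert i) w ≤ D - i := by
    intro i hi
    have h1 : p.reverse.getVert (p.length - i) = p.getVert i := by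
      rw [p.getVert_reverse]; congr 1; omega
    have h2 := hle -- not useful directly; do same proof for reverse walk
    have hle' : ∀ j : ℕ, G.dist w (p.reverse.getVert j) ≤ j := by
      intro j
      induction j with
      | zero => simp
      | succ j ih =>
        by_cases h : j < p.reverse.length
        · have hadj := p.reverse.adj_getVert_succ h
          have h1 : G.dist (p.reverse.getVert j) (p.reverse.getVert (j + 1)) ≤ 1 :=
            G.dist_le (SimpleGraph.Walk.cons hadj SimpleGraph.Walk.nil)
          have := hconn.dist_triangle (u := w) (v := p.reverse.getVert j)
            (w := p.reverse.getVert (j + 1))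
          omega
        · rw [SimpleGraph.Walk.getVert_of_length_le _ (by omega)]
          have hlr : p.reverse.length = p.length := p.length_reverse
          have hwu : G.dist w u = D := by rw [SimpleGraph.dist_comm]; exact hduw
          omega
    have := hle' (p.length - i)
    rw [h1] at this
    rw [SimpleGraph.dist_comm]
    omega
  -- lower bound on distances along the walk
  have hlow : ∀ i j : ℕ, i ≤ j → j ≤ D → j - i ≤ G.dist (p.getVert i) (p.getVert j) := by
    intro i j hij hj
    have t1 := hconn.dist_triangle (u := u) (v := p.getVert i) (w := p.getVert j)
    have t2 := hconn.dist_triangle (u := u) (v := p.getVert j) (w := w)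
    have := hle i
    have := hge j hj
    rw [hduw] at t2
    omega
  -- neighborhood sets
  set S : ℕ → Finset V := fun k =>
    G.neighborFinset (p.getVert (4 * k)) ∪ G.neighborFinset (p.getVert (4 * k + 1)) with hS
  set K : ℕ := (D + 3) / 4 with hK
  have hkD : ∀ k < K, 4 * k + 1 ≤ D := by intro k hk; omega
  -- each S k has at least 2δ elements
  have hScard : ∀ k < K, 2 * δ ≤ (S k).card := by
    intro k hk
    have h1 := hkD k hk
    have hadj : G.Adj (p.getVert (4 * k)) (p.getVert (4 * k + 1)) :=
      p.adj_getVert_succ (by omega)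
    have hdisj : Disjoint (G.neighborFinset (p.getVert (4 * k)))
        (G.neighborFinset (p.getVert (4 * k + 1))) := by
      rw [Finset.disjoint_left]
      intro x hx hy
      rw [SimpleGraph.mem_neighborFinset] at hx hy
      exact htf {p.getVert (4 * k), p.getVert (4 * k + 1), x}
        (SimpleGraph.is3Clique_triple_iff.mpr ⟨hadj, hx, hy⟩)
    rw [hS]
    rw [Finset.card_union_of_disjoint hdisj, SimpleGraph.card_neighborFinset_eq_degree,
      SimpleGraph.card_neighborFinset_eq_degree]
    have d1 := G.minDegree_le_degree (p.getVert (4 * k))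
    have d2 := G.minDegree_le_degree (p.getVert (4 * k + 1))
    omega
  -- the S k are pairwise disjoint
  have hSdisj : ∀ k ∈ Finset.range K, ∀ l ∈ Finset.range K, k ≠ l → Disjoint (S k) (S l) := by
    have key : ∀ k l : ℕ, k < K → l < K → k < l → Disjoint (S k) (S l) := by
      intro k l hk hl hkl
      rw [Finset.disjoint_left]
      intro x hx hy
      rw [hS] at hx hy
      simp only [Finset.mem_union, SimpleGraph.mem_neighborFinset] at hx hy
      obtain ⟨a, ha1, ha2, hxa⟩ : ∃ a, 4 * k ≤ a ∧ a ≤ 4 * k + 1 ∧ G.Adj (p.getVert a) x := by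
        rcases hx with hx | hx
        · exact ⟨4 * k, le_refl _, by omega, hx⟩
        · exact ⟨4 * k + 1, by omega, le_refl _, hx⟩
      obtain ⟨b, hb1, hb2, hxb⟩ : ∃ b, 4 * l ≤ b ∧ b ≤ 4 * l + 1 ∧ G.Adj (p.getVert b) x := by
        rcases hy with hy | hy
        · exact ⟨4 * l, le_refl _, by omega, hy⟩
        · exact ⟨4 * l + 1, by omega, le_refl _, hy⟩
      have hbD : b ≤ D := by have := hkD l hl; omega
      have hlb := hlow a b (by omega) hbD
      have t := hconn.dist_triangle (u := p.getVert a) (v := x) (w := p.getVert b)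
      have e1 : G.dist (p.getVert a) x ≤ 1 :=
        G.dist_le (SimpleGraph.Walk.cons hxa SimpleGraph.Walk.nil)
      have e2 : G.dist x (p.getVert b) ≤ 1 :=
        G.dist_le (SimpleGraph.Walk.cons hxb.symm SimpleGraph.Walk.nil)
      omega
    intro k hk l hl hne'
    rw [Finset.mem_range] at hk hl
    rcases Nat.lt_or_ge k l with h | h
    · exact key k l hk hl h
    · exact (key l k hl hk (by omega)).symm
  -- counting
  have hcount : 2 * δ * K ≤ n := by
    have h1 : ((Finset.range K).biUnion S).card ≤ n := by
      rw [← hn, ← Finset.card_univ]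
      exact Finset.card_le_card (Finset.subset_univ _)
    rw [Finset.card_biUnion hSdisj] at h1
    have h2 : 2 * δ * K ≤ ∑ k ∈ Finset.range K, (S k).card := by
      calc 2 * δ * K = ∑ _k ∈ Finset.range K, 2 * δ := by
            rw [Finset.sum_const, Finset.card_range]; ring
        _ ≤ ∑ k ∈ Finset.range K, (S k).card :=
            Finset.sum_le_sum fun k hk => hScard k (Finset.mem_range.mp hk)
    omega
  -- final real arithmetic
  have hδ0 : (0 : ℝ) < (δ : ℝ) := by
    have : 0 < δ := by omega
    exact_mod_cast this
  have hDK : D ≤ 4 * K := by omega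
  have hcR : 2 * (δ : ℝ) * (K : ℝ) ≤ (n : ℝ) := by exact_mod_cast hcount
  have hx : ((K : ℝ) - 1) < ((n : ℝ) - (δ : ℝ) - 1) / (2 * (δ : ℝ)) := by
    rw [lt_div_iff₀ (by positivity)]
    have hδ3 : (3 : ℝ) ≤ (δ : ℝ) := by exact_mod_cast h3
    nlinarith
  have hceil : (K : ℤ) ≤ ⌈((n : ℝ) - (δ : ℝ) - 1) / (2 * (δ : ℝ))⌉ := by
    have h1 : (K : ℤ) - 1 < ⌈((n : ℝ) - (δ : ℝ) - 1) / (2 * (δ : ℝ))⌉ := by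
      rw [Int.lt_ceil]
      push_cast
      linarith
    omega
  have hceilR : (K : ℝ) ≤ (⌈((n : ℝ) - (δ : ℝ) - 1) / (2 * (δ : ℝ))⌉ : ℝ) := by
    exact_mod_cast hceil
  have hDR : (D : ℝ) ≤ 4 * (K : ℝ) := by exact_mod_cast hDK
  linarith
end

section
/- Let G be a connected C₄-free graph of order n and minimum degree δ ≥ 3. Then diam(G) ≤ ⌊5n/(δ² − 2⌊δ/2⌋ + 1)⌋. -/
/-!
In a C₄-free graph two distinct vertices have at most one common neighbour. Around a vertex `c`
this makes the sets `N(u) \ ({c} ∪ N(c))`, `u ∈ N(c)`, pairwise disjoint, and gives every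
`u ∈ N(c)` at most one neighbour inside `N(c)`, so by the handshake lemma there are at most
`2⌊deg c / 2⌋` such adjacencies in total. Counting `c`, `N(c)` and the disjoint sets, the closed
2-ball of `c` has at least `deg c · δ + 1 − 2⌊deg c / 2⌋ ≥ δ² − 2⌊δ/2⌋ + 1` vertices. On a
shortest `u`–`v` path of length `d` the vertices at positions `0, 5, …, 5⌊d/5⌋` are pairwise at
distance at least 5, so their 2-balls are disjoint and `(⌊d/5⌋ + 1)(δ² − 2⌊δ/2⌋ + 1) ≤ n`.
-/

open SimpleGraph Finset

namespace SimpleGraph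

variable {V : Type*} {G : SimpleGraph V}

def IsC4Free (G : SimpleGraph V) : Prop :=
  ∀ a b c d : V, G.Adj a b → G.Adj b c → G.Adj c d → G.Adj d a → a ≠ c → b ≠ d → False

lemma IsC4Free.eq_of_adj_of_adj (hG : G.IsC4Free) {x y a b : V} (hxy : x ≠ y)
    (hxa : G.Adj x a) (hay : G.Adj a y) (hxb : G.Adj x b) (hby : G.Adj b y) : a = b := by
  by_contra hab
  exact hG x a y b hxa hay hby.symm hxb.symm hxy hab

lemma Walk.sub_le_dist_getVert {u v : V} (p : G.Walk u v) (hp : p.length = G.dist u v)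
    {i j : ℕ} (hij : i ≤ j) (hj : j ≤ p.length) :
    j - i ≤ G.dist (p.getVert i) (p.getVert j) := by
  have hui : G.dist u (p.getVert i) ≤ i :=
    (dist_le (p.take i)).trans (by simp [Walk.take_length])
  have hjv : G.dist (p.getVert j) v ≤ p.length - j :=
    (dist_le (p.drop j)).trans (by simp [Walk.drop_length])
  have huv := (p.take i).reachable.dist_triangle_left v
  have hiv := ((p.take i).reachable.symm.trans (p.take j).reachable).dist_triangle_left v
  omega

section Packing

variable [Fintype V]

lemma Connected.card_mul_le_card_of_pairwise_lt_dist (hG : G.Connected) {ι : Type*}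
    (s : Finset ι) (x : ι → V) {r K : ℕ}
    (hx : (s : Set ι).Pairwise fun i j => 2 * r < G.dist (x i) (x j))
    (hK : ∀ i ∈ s, K ≤ #{w | G.dist (x i) w ≤ r}) : #s * K ≤ Fintype.card V := by
  classical
  have hdisj : (s : Set ι).PairwiseDisjoint fun i => ({w | G.dist (x i) w ≤ r} : Finset V) := by
    intro i hi j hj hij
    rw [Function.onFun, Finset.disjoint_left]
    intro w hwi hwj
    simp only [mem_filter, mem_univ, true_and] at hwi hwj
    have := hG.dist_triangle (u := x i) (v := w) (w := x j)
    have := hx hi hj hij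
    rw [dist_comm] at hwj
    omega
  calc #s * K ≤ ∑ i ∈ s, #{w | G.dist (x i) w ≤ r} := by
        simpa using card_nsmul_le_sum s _ K hK
    _ = #(s.biUnion fun i => {w | G.dist (x i) w ≤ r}) := (card_biUnion hdisj).symm
    _ ≤ Fintype.card V := card_le_univ _

lemma Connected.mul_le_card_of_le_card_ball (hG : G.Connected) {r K : ℕ}
    (hK : ∀ c, K ≤ #{w | G.dist c w ≤ r}) (u v : V) :
    (G.dist u v / (2 * r + 1) + 1) * K ≤ Fintype.card V := by
  obtain ⟨p, hp⟩ := hG.exists_walk_length_eq_dist u v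
  set k := 2 * r + 1
  have hlt {i j : ℕ} (hij : i < j) (hj : j ≤ G.dist u v / k) :
      2 * r < G.dist (p.getVert (k * i)) (p.getVert (k * j)) := by
    have hkj : k * j ≤ p.length :=
      hp ▸ (Nat.mul_le_mul_left k hj).trans (Nat.mul_div_le _ _)
    have := p.sub_le_dist_getVert hp (Nat.mul_le_mul_left k hij.le) hkj
    have := Nat.mul_le_mul_left k hij
    rw [Nat.mul_add_one] at this
    omega
  have hfar : ((range (G.dist u v / k + 1) : Finset ℕ) : Set ℕ).Pairwise
      fun i j => 2 * r < G.dist (p.getVert (k * i)) (p.getVert (k * j)) := by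
    intro i hi j hj hij
    simp only [coe_range, Set.mem_Iio, Nat.lt_succ_iff] at hi hj
    rcases hij.lt_or_gt with h | h
    · exact hlt h hj
    · exact dist_comm (G := G) ▸ hlt h hi
  simpa using hG.card_mul_le_card_of_pairwise_lt_dist _ _ hfar fun i _ => hK _

end Packing

section Ball

variable [Fintype V] [DecidableRel G.Adj]

lemma even_sum_card_neighborFinset_inter [DecidableEq V] (s : Finset V) :
    Even (∑ u ∈ s, #(G.neighborFinset u ∩ s)) := by
  have hdeg (u : (s : Set V)) :
      (G.induce (s : Set V)).degree u = #(G.neighborFinset u ∩ s) := by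
    rw [← card_neighborFinset_eq_degree, ← card_map (.subtype (· ∈ (s : Set V)))]
    congr 1
    ext w
    simp
  have h := (G.induce (s : Set V)).sum_degrees_eq_twice_card_edges
  simp_rw [hdeg] at h
  rw [← sum_coe_sort s]
  exact ⟨_, h.trans (two_mul _)⟩

lemma IsC4Free.card_neighborFinset_inter_le_one [DecidableEq V] (hG : G.IsC4Free) {x y : V}
    (hxy : x ≠ y) : #(G.neighborFinset x ∩ G.neighborFinset y) ≤ 1 := by
  refine card_le_one.2 fun a ha b hb => ?_
  simp only [mem_inter, mem_neighborFinset] at ha hb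
  exact hG.eq_of_adj_of_adj hxy ha.1 ha.2.symm hb.1 hb.2.symm

lemma IsC4Free.sum_card_neighborFinset_inter_le [DecidableEq V] (hG : G.IsC4Free) (c : V) :
    ∑ u ∈ G.neighborFinset c, #(G.neighborFinset u ∩ G.neighborFinset c) ≤
      2 * (G.degree c / 2) := by
  have hle : ∑ u ∈ G.neighborFinset c, #(G.neighborFinset u ∩ G.neighborFinset c) ≤
      G.degree c := by
    rw [← card_neighborFinset_eq_degree]
    refine card_eq_sum_ones (G.neighborFinset c) ▸ sum_le_sum fun u hu => ?_
    exact hG.card_neighborFinset_inter_le_one ((mem_neighborFinset _ _ _).1 hu).ne'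
  obtain ⟨k, hk⟩ := even_sum_card_neighborFinset_inter (G := G) (G.neighborFinset c)
  omega

lemma IsC4Free.pairwiseDisjoint_neighborFinset_sdiff [DecidableEq V] (hG : G.IsC4Free)
    (c : V) : (G.neighborFinset c : Set V).PairwiseDisjoint
      fun u => G.neighborFinset u \ insert c (G.neighborFinset c) := by
  intro u hu u' hu' huu'
  rw [Function.onFun, Finset.disjoint_left]
  refine fun w hw hw' => ?_
  simp only [coe_neighborFinset, mem_neighborSet, mem_sdiff, mem_neighborFinset, mem_insert,
    not_or] at hu hu' hw hw'
  exact hw.2.1 (hG.eq_of_adj_of_adj huu' hw.1 hw'.1.symm hu.symm hu')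

lemma IsC4Free.card_add_sum_card_neighborFinset_sdiff_le [DecidableEq V] (hG : G.IsC4Free)
    (c : V) : 1 + G.degree c +
      ∑ u ∈ G.neighborFinset c, #(G.neighborFinset u \ insert c (G.neighborFinset c)) ≤
        #{w | G.dist c w ≤ 2} := by
  set N := G.neighborFinset c
  set M := fun u => G.neighborFinset u \ insert c N
  have hsub : insert c (N ∪ N.biUnion M) ⊆ ({w | G.dist c w ≤ 2} : Finset V) := by
    intro w hw
    simp only [mem_insert, mem_union, mem_biUnion, mem_filter, mem_univ, true_and] at hw ⊢
    rcases hw with rfl | hw | ⟨u, hu, hw⟩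
    · simp
    · rw [mem_neighborFinset] at hw
      exact (dist_le (Walk.nil.cons hw)).trans (by simp)
    · rw [mem_neighborFinset] at hu
      have huw : G.Adj u w := (mem_neighborFinset _ _ _).1 (mem_sdiff.1 hw).1
      exact (dist_le ((Walk.nil.cons huw).cons hu)).trans (by simp)
  have hc : c ∉ N ∪ N.biUnion M := by simp [N, M]
  have hdisj : Disjoint N (N.biUnion M) := by
    simp only [Finset.disjoint_biUnion_right, M]
    exact fun u _ => disjoint_sdiff.mono_left (subset_insert c N)
  have hcard := card_le_card hsub
  rw [card_insert_of_notMem hc, card_union_of_disjoint hdisj,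
    card_biUnion (hG.pairwiseDisjoint_neighborFinset_sdiff c), card_neighborFinset_eq_degree]
    at hcard
  simp only [N] at hcard ⊢
  omega

lemma IsC4Free.degree_mul_add_one_le {δ : ℕ} (hG : G.IsC4Free) (hδ : ∀ v, δ ≤ G.degree v)
    (c : V) : G.degree c * δ + 1 ≤ #{w | G.dist c w ≤ 2} + 2 * (G.degree c / 2) := by
  classical
  set N := G.neighborFinset c
  have hu (u : V) :
      δ ≤ #(G.neighborFinset u \ insert c N) + 1 + #(G.neighborFinset u ∩ N) := by
    have hinter : G.neighborFinset u ∩ insert c N ⊆ insert c (G.neighborFinset u ∩ N) := by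
      intro x
      simp only [mem_inter, mem_insert]
      tauto
    have hsplit := card_sdiff_add_card_inter (G.neighborFinset u) (insert c N)
    have hcap := (card_le_card hinter).trans (card_insert_le _ _)
    have hdeg : δ ≤ #(G.neighborFinset u) :=
      (hδ u).trans_eq (card_neighborFinset_eq_degree G u).symm
    omega
  have hsum := card_nsmul_le_sum N _ δ fun u _ => hu u
  simp only [sum_add_distrib, sum_const, smul_eq_mul, N, card_neighborFinset_eq_degree] at hsum
  have hpar := hG.sum_card_neighborFinset_inter_le c
  have hball := hG.card_add_sum_card_neighborFinset_sdiff_le c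
  omega

lemma IsC4Free.le_card_filter_dist_le_two {δ : ℕ} (hG : G.IsC4Free) (h2 : 2 ≤ δ)
    (hδ : ∀ v, δ ≤ G.degree v) (c : V) :
    δ ^ 2 - 2 * (δ / 2) + 1 ≤ #{w | G.dist c w ≤ 2} := by
  have hc := hG.degree_mul_add_one_le hδ c
  obtain ⟨k, hk⟩ := Nat.exists_eq_add_of_le (hδ c)
  have : δ * δ + 2 * k ≤ G.degree c * δ := by rw [hk]; nlinarith
  have := Nat.le_mul_self δ
  rw [pow_two]
  omega

end Ball

end SimpleGraph

theorem stmt10_general {V : Type*} [Fintype V] (G : SimpleGraph V)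
    [DecidableRel G.Adj] (n δ : ℕ) (hn : Fintype.card V = n) (hδ : G.minDegree = δ) (hconn : G.Connected) (h3 : 3 ≤ δ) (hc4 : (∀ a b c d : V, G.Adj a b → G.Adj b c → G.Adj c d → G.Adj d a → a ≠ c → b ≠ d → False)) :
    (Finset.univ.sup fun v : V => Finset.univ.sup fun w : V => G.dist v w) ≤ 5 * n / (δ ^ 2 - 2 * (δ / 2) + 1) := by
  have hball (c : V) := IsC4Free.le_card_filter_dist_le_two hc4 (by omega)
    (fun v => hδ ▸ G.minDegree_le_degree v) c
  refine Finset.sup_le fun u _ => Finset.sup_le fun v _ => ?_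
  have hpack := hconn.mul_le_card_of_le_card_ball hball u v
  rw [hn, ← Nat.le_div_iff_mul_le (by omega)] at hpack
  calc G.dist u v ≤ 5 * (G.dist u v / 5 + 1) := (Nat.lt_mul_div_succ _ (by norm_num)).le
    _ ≤ 5 * (n / (δ ^ 2 - 2 * (δ / 2) + 1)) := by gcongr
    _ ≤ 5 * n / (δ ^ 2 - 2 * (δ / 2) + 1) := Nat.mul_div_le_mul_div_assoc _ _ _

theorem stmt10 {V : Type*} [Fintype V] [DecidableEq V] (G : SimpleGraph V)
    [DecidableRel G.Adj] (n δ : ℕ) (hn : Fintype.card V = n) (hδ : G.minDegree = δ) (hconn : G.Connected) (h3 : 3 ≤ δ) (hc4 : (∀ a b c d : V, G.Adj a b → G.Adj b c → G.Adj c d → G.Adj d a → a ≠ c → b ≠ d → False)) :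
    (Finset.univ.sup fun v : V => Finset.univ.sup fun w : V => G.dist v w) ≤ 5 * n / (δ ^ 2 - 2 * (δ / 2) + 1) :=
  stmt10_general G n δ hn hδ hconn h3 hc4
end
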